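/- arXiv:1009.5420 — 9 statements merged into one kernel-verified Lean document; each statement's English description precedes it below -/
import Mathlib

section
/- Let μ be a cardinal, n ≤ ω, σ a cardinal, and ⟨λ_i⟩_{i<σ} cardinals with κ = Σ_{i<σ} λ_i. Suppose K is a real closed field which contains a family witnessing σ ↛ (μ)_n^interval and, for each i < σ, a family witnessing λ_i ↛ (μ)_n^interval. Then there is a real closed field K′ admitting an ordered-ring embedding of K which contains a family witnessing κ ↛ (μ)_{2+2n}^interval (where 2+2n is interpreted as ω when n = ω). -/
/-- A real closed field: a linearly ordered field in which every nonnegative element is a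
square and every polynomial of odd degree has a root. -/
def IsRCF (K : Type) [Field K] [LinearOrder K] [IsStrictOrderedRing K] : Prop :=
  (∀ x : K, 0 ≤ x → ∃ y : K, y ^ 2 = x) ∧
  (∀ p : Polynomial K, Odd p.natDegree → ∃ x : K, Polynomial.eval x p = 0)

/-- A bundled real closed field. -/
structure RCF where
  carrier : Type
  [inst : Field carrier]
  [instLO : LinearOrder carrier]
  [instSOR : IsStrictOrderedRing carrier]
  rcf : IsRCF carrier

attribute [instance] RCF.inst
attribute [instance] RCF.instLO
attribute [instance] RCF.instSOR

/-- Quantifier-free indiscernibility of a sequence of `ι`-tuples in an ordered field: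
for every integer polynomial in the variables of `k` many tuples, the sign of its value is
the same on every increasing `k`-tuple of indices of the sequence. -/
def PolyIndisc {L : Type} [Field L] [LinearOrder L] [IsStrictOrderedRing L] {ι : Type} {δ : Type} [LinearOrder δ]
    (b : δ → ι → L) : Prop :=
  ∀ (k : ℕ) (f : MvPolynomial (Fin k × ι) ℤ) (α β : Fin k → δ),
    StrictMono α → StrictMono β →
      ((0 < MvPolynomial.aeval (fun p => b (α p.1) p.2) f ↔
          0 < MvPolynomial.aeval (fun p => b (β p.1) p.2) f) ∧
        (MvPolynomial.aeval (fun p => b (α p.1) p.2) f = 0 ↔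
          MvPolynomial.aeval (fun p => b (β p.1) p.2) f = 0))

/-- `IntervalWitness K θ μ ι I` : the family `I` of pairwise distinct `ι`-tuples of nonempty
open intervals of `K` witnesses `θ ↛ (μ)_ι^interval` : in no real closed extension of `K` can
one choose points from `μ` many distinct members of the family forming a quantifier-free
indiscernible sequence. -/
def IntervalWitness (K : RCF) (θ μ : Cardinal) (ι : Type)
    (I : θ.ord.ToType → ι → K.carrier × K.carrier) : Prop :=
  Function.Injective I ∧
  (∀ β i, (I β i).1 < (I β i).2) ∧
  ∀ (L : RCF) (j : K.carrier →+*o L.carrier),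
    ¬ ∃ (e : μ.ord.ToType → θ.ord.ToType) (b : μ.ord.ToType → ι → L.carrier),
        Function.Injective e ∧
        (∀ α i, j ((I (e α) i).1) < b α i ∧ b α i < j ((I (e α) i).2)) ∧
        PolyIndisc b

/-- The index type of an `n`-tuple for `n ≤ ω`: `Fin m` for `n = m < ω`, and `ℕ` for
`n = ω` (i.e. `n = ⊤`). -/
def TupIdx (n : ℕ∞) : Type :=
  WithTop.recTopCoe ℕ (fun m => Fin m) n

/-!
Embed `K` in an ultrapower `K'` that contains points `c i` (`i < σ`) pairwise at distance at
least `4`; `K` itself need not have that many. The `a`-th member of block `i` is coded by two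
copies of the interval `(c i - 1, c i + 1)`, followed by the `i`-th tuple of the `σ`-family and
the `a`-th tuple of the `λ_i`-family. For an indiscernible selection, whether the tag coordinates
of two selected points are more than `2` apart is the sign of one polynomial, hence the same for
all pairs: either all selected blocks are distinct, which gives an indiscernible selection from
the `σ`-family, or they all equal one `i`, which gives one from the `λ_i`-family.
-/

open Filter

namespace IsRCF

variable {K : Type} [Field K] [LinearOrder K] [IsStrictOrderedRing K] {ι : Type}

theorem germ (h : IsRCF K) (u : Ultrafilter ι) : IsRCF (Germ (u : Filter ι) K) := by
  refine ⟨fun x hx => ?_, fun p hp => ?_⟩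
  · induction x using Germ.inductionOn with
    | h f =>
      choose y hy using fun s => (em (0 ≤ f s)).elim (fun hs => (h.1 (f s) hs).imp fun _ h _ => h)
        fun hs => ⟨0, fun h => absurd h hs⟩
      refine ⟨y, Germ.coe_eq.2 ?_⟩
      filter_upwards [Germ.coe_le.1 hx] with s hs using hy s hs
  · obtain ⟨P, rfl, hdeg⟩ := Polynomial.exists_natDegree_eq_of_mem_lifts
      (Polynomial.mem_lifts_of_surjective (f := Germ.coeRingHom (u : Filter ι))
        Quot.mk_surjective p)
    have hlead : ∀ᶠ s in (u : Filter ι), P.leadingCoeff s ≠ 0 := by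
      refine Ultrafilter.eventually_not.2 fun h0 => ?_
      have : (P.map (Germ.coeRingHom (u : Filter ι))).leadingCoeff = 0 := by
        rw [Polynomial.leadingCoeff, ← hdeg, Polynomial.coeff_map]
        exact Germ.coe_eq.2 h0
      simp [Polynomial.leadingCoeff_eq_zero.1 this] at hp
    choose x hx using fun s => (em (Odd (P.map (Pi.evalRingHom _ s)).natDegree)).elim
      (fun hs => (h.2 _ hs).imp fun _ h _ => h) fun hs => ⟨0, fun h => absurd h hs⟩
    refine ⟨x, ?_⟩
    rw [Polynomial.eval_map, ← Germ.coe_coeRingHom, Polynomial.eval₂_at_apply]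
    refine Germ.coe_eq.2 ?_
    filter_upwards [hlead] with s hs
    have hdeg_s := Polynomial.natDegree_map_of_leadingCoeff_ne_zero (Pi.evalRingHom _ s) (p := P) hs
    have := hx s (by rwa [hdeg_s, hdeg])
    rwa [Polynomial.eval_map, show x s = Pi.evalRingHom _ s x from rfl,
      Polynomial.eval₂_at_apply] at this

end IsRCF

theorem Filter.Germ.exists_ultrapower_unit_gaps (K : Type) [Field K] [LinearOrder K]
    [IsStrictOrderedRing K] (S : Type) [LinearOrder S] :
    ∃ (ι : Type) (u : Ultrafilter ι) (c : S → Germ (u : Filter ι) K),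
      ∀ ⦃i i' : S⦄, i < i' → c i + 1 ≤ c i' := by
  classical
  refine ⟨Finset S, .of atTop, fun i => ↑(fun s : Finset S => ((s.filter (· < i)).card : K)),
    fun i i' hii' => ?_⟩
  have hi : ∀ᶠ s in ((Ultrafilter.of atTop : Ultrafilter (Finset S)) : Filter (Finset S)), i ∈ s :=
    Ultrafilter.of_le _ (mem_of_superset (Ici_mem_atTop ({i} : Finset S))
      fun s hs => Finset.singleton_subset_iff.1 hs)
  rw [← Germ.coe_one, ← Germ.coe_add, Germ.coe_le]
  filter_upwards [hi] with s hs
  have : (s.filter (· < i)).card < (s.filter (· < i')).card :=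
    Finset.card_lt_card <| (Finset.ssubset_iff_of_subset (Finset.monotone_filter_right s
      fun _ _ hx => hx.trans hii')).2 ⟨i, by simp [hs, hii']⟩
  simpa using (Nat.cast_le (α := K)).2 this

namespace RCF

noncomputable def ultrapower (K : RCF) {ι : Type} (u : Ultrafilter ι) : RCF :=
  ⟨Germ (u : Filter ι) K.carrier, K.rcf.germ u⟩

noncomputable def toUltrapower (K : RCF) {ι : Type} (u : Ultrafilter ι) :
    K.carrier →+*o (K.ultrapower u).carrier where
  toRingHom := (Germ.coeRingHom (u : Filter ι)).comp (Pi.constRingHom ι K.carrier)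
  monotone' _ _ := Germ.const_le

theorem exists_extension_separated (K : RCF) (S : Type) :
    ∃ (K' : RCF) (_ : K.carrier →+*o K'.carrier) (c : S → K'.carrier),
      Pairwise fun i i' => c i + 4 ≤ c i' ∨ c i' + 4 ≤ c i := by
  let : LinearOrder S := IsWellOrder.linearOrder WellOrderingRel
  obtain ⟨ι, u, c, hc⟩ := Germ.exists_ultrapower_unit_gaps K.carrier S
  refine ⟨K.ultrapower u, K.toUltrapower u, fun i => (4 * c i : Germ (u : Filter ι) K.carrier),
    fun i i' hne => ?_⟩
  show 4 * c i + 4 ≤ 4 * c i' ∨ 4 * c i' + 4 ≤ 4 * c i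
  rcases hne.lt_or_gt with h | h
  · exact .inl (by linarith [hc h])
  · exact .inr (by linarith [hc h])

end RCF

section Selection

variable {K K' L : RCF} {β β' : Type*} {δ ι ι' : Type} [LinearOrder δ]

theorem PolyIndisc.comp_right {b : δ → ι' → L.carrier} (h : PolyIndisc b) (φ : ι → ι') :
    PolyIndisc fun a t => b a (φ t) := by
  intro k f α β hα hβ
  simpa [MvPolynomial.aeval_rename, Function.comp_def] using
    h k (MvPolynomial.rename (Prod.map id φ) f) α β hα hβ

theorem PolyIndisc.lt_sq_sub_iff {b : δ → ι → L.carrier} (h : PolyIndisc b) (t : ι) (m : ℤ)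
    {α α' γ γ' : δ} (hα : α ≠ α') (hγ : γ ≠ γ') :
    (m < (b α t - b α' t) ^ 2 ↔ m < (b γ t - b γ' t) ^ 2) := by
  have hmono : ∀ {α α' γ γ' : δ}, α < α' → γ < γ' →
      (m < (b α t - b α' t) ^ 2 ↔ m < (b γ t - b γ' t) ^ 2) := fun {α α' γ γ'} hα hγ => by
    have key := (h 2 ((.X (0, t) - .X (1, t)) ^ 2 - .C m) ![α, α'] ![γ, γ']
      (by simpa using hα) (by simpa using hγ)).1
    simp only [map_sub, map_pow, MvPolynomial.aeval_X, MvPolynomial.aeval_C, sub_pos] at key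
    simpa using key
  have hswap : ∀ α α' : δ, (b α t - b α' t) ^ 2 = (b α' t - b α t) ^ 2 := fun _ _ => by ring
  rcases hα.lt_or_gt with hα | hα <;> rcases hγ.lt_or_gt with hγ | hγ
  · exact hmono hα hγ
  · rw [hswap γ]; exact hmono hα hγ
  · rw [hswap α]; exact hmono hα hγ
  · rw [hswap α, hswap γ]; exact hmono hα hγ

def IsIndiscSelection (j : K.carrier →+*o L.carrier) (I : β → ι → K.carrier × K.carrier)
    (e : δ → β) (b : δ → ι → L.carrier) : Prop :=
  Function.Injective e ∧ (∀ α t, j (I (e α) t).1 < b α t ∧ b α t < j (I (e α) t).2) ∧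
    PolyIndisc b

theorem IsIndiscSelection.restrict {j : K.carrier →+*o L.carrier}
    {I : β → ι → K.carrier × K.carrier} {e : δ → β} {b : δ → ι → L.carrier}
    (h : IsIndiscSelection j I e b) {J : β' → ι' → K.carrier × K.carrier} (e' : δ → β')
    (he' : Function.Injective e') (φ : ι' → ι) (hJ : ∀ α t, J (e' α) t = I (e α) (φ t)) :
    IsIndiscSelection j J e' fun α t => b α (φ t) :=
  ⟨he', fun α t => hJ α t ▸ h.2.1 α (φ t), h.2.2.comp_right φ⟩

def IsIntervalWitness (K : RCF) (μ : Cardinal) (I : β → ι → K.carrier × K.carrier) : Prop :=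
  Function.Injective I ∧ (∀ x t, (I x t).1 < (I x t).2) ∧
    ∀ (L : RCF) (j : K.carrier →+*o L.carrier),
      ¬ ∃ (e : μ.ord.ToType → β) (b : μ.ord.ToType → ι → L.carrier), IsIndiscSelection j I e b

theorem intervalWitness_iff {θ μ : Cardinal} {I : θ.ord.ToType → ι → K.carrier × K.carrier} :
    IntervalWitness K θ μ ι I ↔ IsIntervalWitness K μ I :=
  Iff.rfl

theorem IsIntervalWitness.map {μ : Cardinal} {I : β → ι → K.carrier × K.carrier}
    (h : IsIntervalWitness K μ I) (f : K.carrier →+*o K'.carrier) :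
    IsIntervalWitness K' μ fun x t => Prod.map f f (I x t) := by
  have hf : Function.Injective f := f.toRingHom.injective
  refine ⟨fun x y hxy => h.1 (funext fun t => (hf.prodMap hf) (congrFun hxy t)), fun x t => ?_,
    fun L j ⟨e, b, hsel⟩ => h.2.2 L (j.comp f) ⟨e, b, hsel⟩⟩
  exact f.monotone'.strictMono_of_injective hf (h.2.1 x t)

theorem IsIntervalWitness.comp {μ : Cardinal} {I : β → ι → K.carrier × K.carrier}
    (h : IsIntervalWitness K μ I) {E : β' → β} (hE : Function.Injective E) {P : ι' → ι}
    (hP : Function.Surjective P) : IsIntervalWitness K μ fun x t => I (E x) (P t) := by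
  refine ⟨fun x y hxy => hE (h.1 (hP.injective_comp_right hxy)), fun x t => h.2.1 _ _,
    fun L j ⟨e, b, hsel⟩ => h.2.2 L j ⟨E ∘ e, _, hsel.restrict _ (hE.comp hsel.1)
      (Function.surjInv hP) fun α t => ?_⟩⟩
  simp [Function.surjInv_eq hP]

end Selection

theorem Sigma.exists_eq_mk_of_fst_eq {δ S : Type*} {T : S → Type*} {f : δ → Σ i, T i} {i : S}
    (h : ∀ a, (f a).1 = i) : ∃ g : δ → T i, ∀ a, f a = ⟨i, g a⟩ := by
  choose g hg using fun a => show ∃ y : T i, f a = ⟨i, y⟩ by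
    have := h a
    revert this
    generalize f a = p
    rintro rfl
    exact ⟨p.2, rfl⟩
  exact ⟨g, hg⟩

section Block

variable {K L : RCF} {S : Type*} {T : S → Type*} {ι₀ ι δ : Type} [LinearOrder δ]

def blockFamily (c : S → K.carrier) (J0 : S → ι → K.carrier × K.carrier)
    (J1 : (i : S) → T i → ι → K.carrier × K.carrier) (p : Σ i, T i) :
    ι₀ ⊕ ι ⊕ ι → K.carrier × K.carrier :=
  Sum.elim (fun _ => (c p.1 - 1, c p.1 + 1)) (Sum.elim (J0 p.1) (J1 p.1 p.2))

variable {c : S → K.carrier} {J0 : S → ι → K.carrier × K.carrier}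
  {J1 : (i : S) → T i → ι → K.carrier × K.carrier}

theorem blockFamily_injective [Nonempty ι₀] (hc : Function.Injective c)
    (h1 : ∀ i, Function.Injective (J1 i)) :
    Function.Injective (blockFamily (ι₀ := ι₀) c J0 J1) := by
  rintro ⟨i, a⟩ ⟨i', a'⟩ h
  obtain ⟨t₀⟩ := ‹Nonempty ι₀›
  obtain rfl : i = i' := hc (by simpa [blockFamily] using congrFun h (.inl t₀))
  exact congrArg _ (h1 i (funext fun t => congrFun h (.inr (.inr t))))

theorem IsIndiscSelection.blockFamily_fst_ne_iff
    (hc : Pairwise fun i i' => c i + 4 ≤ c i' ∨ c i' + 4 ≤ c i) {j : K.carrier →+*o L.carrier}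
    {e : δ → Σ i, T i} {b : δ → ι₀ ⊕ ι ⊕ ι → L.carrier}
    (h : IsIndiscSelection j (blockFamily c J0 J1) e b) (t₀ : ι₀) (α α' : δ) :
    (e α).1 ≠ (e α').1 ↔ 4 < (b α (.inl t₀) - b α' (.inl t₀)) ^ 2 := by
  have hx : ∀ α, j (c (e α).1) - 1 < b α (.inl t₀) ∧ b α (.inl t₀) < j (c (e α).1) + 1 := by
    simpa [blockFamily] using fun α => h.2.1 α (.inl t₀)
  obtain ⟨hα₁, hα₂⟩ := hx α
  obtain ⟨hα'₁, hα'₂⟩ := hx α'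
  constructor
  · intro hne
    have hgap : ∀ {i i' : S}, c i + 4 ≤ c i' → j (c i) + 4 ≤ j (c i') := fun hle => by
      have := OrderHomClass.mono j hle
      rwa [map_add, map_ofNat] at this
    rcases hc hne with hle | hle <;> nlinarith [hgap hle]
  · intro hsq heq
    rw [heq] at hα₁ hα₂
    nlinarith

theorem isIntervalWitness_blockFamily [Nonempty ι₀] {μ : Cardinal}
    (hc : Pairwise fun i i' => c i + 4 ≤ c i' ∨ c i' + 4 ≤ c i) (h0 : IsIntervalWitness K μ J0)
    (h1 : ∀ i, IsIntervalWitness K μ (J1 i)) :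
    IsIntervalWitness K μ (blockFamily (ι₀ := ι₀) c J0 J1) := by
  have hcinj : Function.Injective c := fun i i' hii' => by
    by_contra hne
    rcases hc hne with h | h <;> linarith
  refine ⟨blockFamily_injective hcinj fun i => (h1 i).1, ?_, ?_⟩
  · rintro p (_ | t | t)
    · show c p.1 - 1 < c p.1 + 1
      linarith
    · exact h0.2.1 p.1 t
    · exact (h1 p.1).2.1 p.2 t
  rintro L j ⟨e, b, hsel⟩
  obtain ⟨t₀⟩ := ‹Nonempty ι₀›
  by_cases hinj : Function.Injective fun α => (e α).1
  · exact h0.2.2 L j ⟨_, _, hsel.restrict _ hinj (Sum.inr ∘ Sum.inl) fun _ _ => rfl⟩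
  obtain ⟨α, α', hαα', hne⟩ : ∃ α α', (e α).1 = (e α').1 ∧ α ≠ α' := by
    simpa [Function.Injective] using hinj
  have hconst : ∀ γ, (e γ).1 = (e α).1 := fun γ => by
    by_contra hγ
    have hfar := (hsel.blockFamily_fst_ne_iff hc t₀ γ α).1 hγ
    have hγα : γ ≠ α := by rintro rfl; exact hγ rfl
    have hiff := hsel.2.2.lt_sq_sub_iff (.inl t₀) 4 hγα hne
    rw [Int.cast_ofNat] at hiff
    exact (hsel.blockFamily_fst_ne_iff hc t₀ α α').2 (hiff.1 hfar) hαα'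
  obtain ⟨g, hg⟩ := Sigma.exists_eq_mk_of_fst_eq hconst
  have hginj : Function.Injective g := fun γ γ' hγ => hsel.1 (by rw [hg γ, hg γ', hγ])
  exact (h1 _).2.2 L j ⟨g, _, hsel.restrict g hginj (Sum.inr ∘ Sum.inr) fun γ t => by
    rw [hg γ]; rfl⟩

end Block

theorem nonempty_equiv_tupIdx_two_add_two_mul (n : ℕ∞) :
    Nonempty ((Fin 2 ⊕ TupIdx n ⊕ TupIdx n) ≃ TupIdx (2 + 2 * n)) := by
  cases n using ENat.recTopCoe with
  | top =>
    rw [show (2 : ℕ∞) + 2 * ⊤ = ⊤ by simp]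
    exact ⟨(Denumerable.ofEncodableOfInfinite (Fin 2 ⊕ ℕ ⊕ ℕ)).eqv⟩
  | coe m =>
    rw [show (2 : ℕ∞) + 2 * m = ((2 + 2 * m : ℕ) : ℕ∞) by push_cast; ring]
    exact ⟨Fintype.equivFinOfCardEq (α := Fin 2 ⊕ Fin m ⊕ Fin m) (by simp; ring)⟩

/-- the singular-cardinal step.  Let `κ = Σ_{i<σ} λ_i`.  If a real closed
field `K` contains a family witnessing `σ ↛ (μ)_n^interval` and, for each `i < σ`, a family
witnessing `λ_i ↛ (μ)_n^interval`, then some real closed extension `K'` of `K` contains a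
family witnessing `κ ↛ (μ)_{2+2n}^interval`. -/
theorem rcf_witness_singular_step (μ σ : Cardinal) (n : ℕ∞)
    (lam : σ.ord.ToType → Cardinal) (κ : Cardinal) (hκ : κ = Cardinal.sum lam)
    (K : RCF)
    (I0 : σ.ord.ToType → TupIdx n → K.carrier × K.carrier)
    (h0 : IntervalWitness K σ μ (TupIdx n) I0)
    (I1 : ∀ i : σ.ord.ToType, (lam i).ord.ToType → TupIdx n → K.carrier × K.carrier)
    (h1 : ∀ i, IntervalWitness K (lam i) μ (TupIdx n) (I1 i)) :
    ∃ (K' : RCF) (_ : K.carrier →+*o K'.carrier)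
      (I : κ.ord.ToType → TupIdx (2 + 2 * n) → K'.carrier × K'.carrier),
      IntervalWitness K' κ μ (TupIdx (2 + 2 * n)) I := by
  -- The points are indexed by the tuples `I0 i`, not by `σ`, to keep the ultrapower in `Type`.
  obtain ⟨K', f, c, hc⟩ := K.exists_extension_separated (TupIdx n → K.carrier × K.carrier)
  obtain ⟨E⟩ : Nonempty (κ.ord.ToType ≃ Σ i, (lam i).ord.ToType) := by
    simp only [← Cardinal.eq, Cardinal.mk_sigma, Cardinal.mk_ord_toType, hκ]
  obtain ⟨P⟩ := nonempty_equiv_tupIdx_two_add_two_mul n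
  have hblock : IsIntervalWitness K' μ (blockFamily (ι₀ := Fin 2) (c ∘ I0) _ _) :=
    isIntervalWitness_blockFamily (hc.comp_of_injective h0.1) ((intervalWitness_iff.1 h0).map f)
      fun i => (intervalWitness_iff.1 (h1 i)).map f
  exact ⟨K', f, _, intervalWitness_iff.2 (hblock.comp E.injective P.symm.surjective)⟩
end

section
/- (Asymptotic form of the key lemma (♥).) Let m ≥ 1 and let u, v : Fin m → ℝ with u_k < v_k for all k, and set c_k = (u_k + v_k)/2. For d ∈ ℝ and η : Fin m → {0,1} define A_η(d) = Σ_{i<m} η(i)·c_i·d^{m-i} and B_η(d) = Σ_{i<m} η(i)·d^{m-i}. Then there exists D ∈ ℝ such that for every d > D, for all η₁ ≠ η₂ : Fin m → {0,1}, and for all reals b₁, b₂, b₃, b₄ with |b₁ − A_{η₁}(d)| < 1, |b₂ − B_{η₁}(d)| < 1, |b₃ − A_{η₂}(d)| < 1 and |b₄ − B_{η₂}(d)| < 1, one has b₂ − b₄ ≠ 0 and u_k < (b₁ − b₃)/(b₂ − b₄) < v_k, where k is the least index with η₁(k) ≠ η₂(k). -/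
set_option maxHeartbeats 1000000


/-- Asymptotic form of the key lemma (♥) from the RCF construction.
For `η : Fin m → Bool`, `A_η(d) = Σ_{i<m} η(i)·c_i·d^(m-i)` and
`B_η(d) = Σ_{i<m} η(i)·d^(m-i)` where `c_k = (u k + v k)/2`. -/
theorem asymptotic_heart_lemma (m : ℕ) (hm : 1 ≤ m) (u v : Fin m → ℝ)
    (huv : ∀ k, u k < v k) :
    ∃ D : ℝ, ∀ d : ℝ, D < d →
      ∀ η₁ η₂ : Fin m → Bool, η₁ ≠ η₂ →
        ∀ b₁ b₂ b₃ b₄ : ℝ,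
          |b₁ - ∑ i : Fin m, (if η₁ i then ((u i + v i) / 2) * d ^ (m - (i : ℕ)) else 0)| < 1 →
          |b₂ - ∑ i : Fin m, (if η₁ i then d ^ (m - (i : ℕ)) else 0)| < 1 →
          |b₃ - ∑ i : Fin m, (if η₂ i then ((u i + v i) / 2) * d ^ (m - (i : ℕ)) else 0)| < 1 →
          |b₄ - ∑ i : Fin m, (if η₂ i then d ^ (m - (i : ℕ)) else 0)| < 1 →
          ∀ k : Fin m, η₁ k ≠ η₂ k → (∀ l : Fin m, l < k → η₁ l = η₂ l) →
            b₂ - b₄ ≠ 0 ∧ u k < (b₁ - b₃) / (b₂ - b₄) ∧ (b₁ - b₃) / (b₂ - b₄) < v k := by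
  haveI : NeZero m := ⟨by omega⟩
  set W : ℝ := 1 + ∑ i, |(u i + v i) / 2| with hWdef
  clear_value W
  have hW0 : ∀ i, |(u i + v i) / 2| ≤ W := by
    intro i
    rw [hWdef]
    have h1 : |(u i + v i) / 2| ≤ ∑ j, |(u j + v j) / 2| :=
      Finset.single_le_sum (f := fun j => |(u j + v j) / 2|) (fun j _ => abs_nonneg _)
        (Finset.mem_univ i)
    linarith
  have hW1 : (1 : ℝ) ≤ W := by
    rw [hWdef]
    have : 0 ≤ ∑ j, |(u j + v j) / 2| := Finset.sum_nonneg fun j _ => abs_nonneg _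
    linarith
  set ε : ℝ := Finset.univ.inf' Finset.univ_nonempty (fun k => (v k - u k) / 2) with hεdef
  clear_value ε
  have hε : 0 < ε := by
    rw [hεdef, Finset.lt_inf'_iff]
    intro k _
    linarith [huv k]
  have hεk : ∀ k : Fin m, ε ≤ (v k - u k) / 2 := fun k => by
    rw [hεdef]; exact Finset.inf'_le _ (Finset.mem_univ k)
  set K : ℝ := 2 * m * W + 2 with hKdef
  clear_value K
  have hK : 0 < K := by
    rw [hKdef]
    have hm0 : (0:ℝ) ≤ (m:ℝ) := Nat.cast_nonneg m
    nlinarith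
  refine ⟨max (2 * K) (2 * (1 + W) * K / ε), ?_⟩
  intro d hd η₁ η₂ hne b₁ b₂ b₃ b₄ h₁ h₂ h₃ h₄ k hk hmin
  have hdK : 2 * K < d := lt_of_le_of_lt (le_max_left _ _) hd
  have hdε : 2 * (1 + W) * K < d * ε := by
    have := lt_of_le_of_lt (le_max_right _ _) hd
    exact (div_lt_iff₀ hε).mp this
  have hd1 : (1 : ℝ) ≤ d := by nlinarith
  have hd0 : (0 : ℝ) < d := by linarith
  set e : ℕ := m - (k : ℕ) with hedef
  clear_value e
  have he1 : 1 ≤ e := by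
    have := k.isLt
    omega
  have hpow : d ^ e = d * d ^ (e - 1) := by
    conv_lhs => rw [show e = 1 + (e - 1) by omega]
    rw [pow_add, pow_one]
  have hde1 : (1 : ℝ) ≤ d ^ (e - 1) := one_le_pow₀ hd1
  have hde0 : (0 : ℝ) < d ^ e := by positivity
  set σ : ℝ := if η₁ k then 1 else -1 with hσdef
  clear_value σ
  -- key estimate for a generic bounded weight
  have key : ∀ w : Fin m → ℝ, (∀ i, |w i| ≤ W) →
      |(∑ i : Fin m, (if η₁ i then w i * d ^ (m - (i : ℕ)) else 0)) -
        (∑ i : Fin m, (if η₂ i then w i * d ^ (m - (i : ℕ)) else 0)) -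
        σ * (w k * d ^ e)| ≤ 2 * m * W * d ^ (e - 1) := by
    intro w hw
    rw [← Finset.sum_sub_distrib]
    have hterm : (if η₁ k then w k * d ^ (m - (k : ℕ)) else 0) -
        (if η₂ k then w k * d ^ (m - (k : ℕ)) else 0) = σ * (w k * d ^ e) := by
      rw [hσdef, hedef]
      cases h1 : η₁ k <;> cases h2 : η₂ k <;> simp_all
    rw [← hterm, ← Finset.sum_erase_eq_sub (Finset.mem_univ k)]
    have hbound : ∀ i ∈ Finset.univ.erase k,
        |(if η₁ i then w i * d ^ (m - (i : ℕ)) else 0) -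
          (if η₂ i then w i * d ^ (m - (i : ℕ)) else 0)| ≤ 2 * W * d ^ (e - 1) := by
      intro i hi
      have hik : i ≠ k := Finset.ne_of_mem_erase hi
      rcases lt_trichotomy i k with h | h | h
      · rw [hmin i h]
        simp only [sub_self, abs_zero]
        positivity
      · exact absurd h hik
      · -- k < i, so m - i ≤ e - 1
        have hexp : m - (i : ℕ) ≤ e - 1 := by
          have hki : (k : ℕ) < (i : ℕ) := h
          have := i.isLt
          omega
        have hdle : d ^ (m - (i : ℕ)) ≤ d ^ (e - 1) := pow_le_pow_right₀ hd1 hexp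
        have hdpos : (0 : ℝ) ≤ d ^ (m - (i : ℕ)) := by positivity
        have hone : ∀ b : Bool, |(if b = true then w i * d ^ (m - (i : ℕ)) else 0)| ≤
            W * d ^ (e - 1) := by
          intro b
          cases b
          · simp only [Bool.false_eq_true, if_false, abs_zero]
            positivity
          · simp only [if_true, abs_mul, abs_pow, abs_of_nonneg (le_of_lt hd0)]
            exact mul_le_mul (hw i) hdle hdpos (by linarith)
        calc |(if η₁ i then w i * d ^ (m - (i : ℕ)) else 0) -
              (if η₂ i then w i * d ^ (m - (i : ℕ)) else 0)|
            ≤ |(if η₁ i then w i * d ^ (m - (i : ℕ)) else 0)| +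
              |(if η₂ i then w i * d ^ (m - (i : ℕ)) else 0)| := abs_sub _ _
          _ ≤ W * d ^ (e - 1) + W * d ^ (e - 1) := add_le_add (hone _) (hone _)
          _ = 2 * W * d ^ (e - 1) := by ring
    calc |∑ i ∈ Finset.univ.erase k,
          ((if η₁ i then w i * d ^ (m - (i : ℕ)) else 0) -
            (if η₂ i then w i * d ^ (m - (i : ℕ)) else 0))|
        ≤ ∑ i ∈ Finset.univ.erase k,
          |(if η₁ i then w i * d ^ (m - (i : ℕ)) else 0) -
            (if η₂ i then w i * d ^ (m - (i : ℕ)) else 0)| := Finset.abs_sum_le_sum_abs _ _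
      _ ≤ ∑ _i ∈ Finset.univ.erase k, (2 * W * d ^ (e - 1)) := Finset.sum_le_sum hbound
      _ = (Finset.univ.erase k).card * (2 * W * d ^ (e - 1)) := by
          rw [Finset.sum_const, nsmul_eq_mul]
      _ ≤ m * (2 * W * d ^ (e - 1)) := by
          have hcard : ((Finset.univ.erase k).card : ℝ) ≤ m := by
            have := Finset.card_erase_le (a := k) (s := (Finset.univ : Finset (Fin m)))
            have h2 : (Finset.univ : Finset (Fin m)).card = m := Finset.card_univ.trans (Fintype.card_fin m)
            have : (Finset.univ.erase k).card ≤ m := by omega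
            exact_mod_cast this
          have : (0 : ℝ) ≤ 2 * W * d ^ (e - 1) := by positivity
          nlinarith
      _ = 2 * m * W * d ^ (e - 1) := by ring
  have hkeyA : |(∑ i : Fin m, (if η₁ i then ((u i + v i) / 2) * d ^ (m - (i : ℕ)) else 0)) -
      (∑ i : Fin m, (if η₂ i then ((u i + v i) / 2) * d ^ (m - (i : ℕ)) else 0)) -
      σ * (((u k + v k) / 2) * d ^ e)| ≤ 2 * m * W * d ^ (e - 1) :=
    key (fun i => (u i + v i) / 2) hW0
  have hkeyB : |(∑ i : Fin m, (if η₁ i then (1 : ℝ) * d ^ (m - (i : ℕ)) else 0)) -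
      (∑ i : Fin m, (if η₂ i then (1 : ℝ) * d ^ (m - (i : ℕ)) else 0)) -
      σ * ((1 : ℝ) * d ^ e)| ≤ 2 * m * W * d ^ (e - 1) :=
    key (fun _ => (1 : ℝ)) (fun _ => by rw [abs_one]; exact hW1)
  simp only [one_mul] at hkeyB
  set c : ℝ := (u k + v k) / 2 with hcdef
  clear_value c
  have hcW : |c| ≤ W := by rw [hcdef]; exact hW0 k
  set SA1 : ℝ := ∑ i : Fin m, (if η₁ i then ((u i + v i) / 2) * d ^ (m - (i : ℕ)) else 0) with hSA1
  clear_value SA1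
  set SA2 : ℝ := ∑ i : Fin m, (if η₂ i then ((u i + v i) / 2) * d ^ (m - (i : ℕ)) else 0) with hSA2
  clear_value SA2
  set SB1 : ℝ := ∑ i : Fin m, (if η₁ i then d ^ (m - (i : ℕ)) else 0) with hSB1
  clear_value SB1
  set SB2 : ℝ := ∑ i : Fin m, (if η₂ i then d ^ (m - (i : ℕ)) else 0) with hSB2
  clear_value SB2
  set X : ℝ := b₁ - b₃ with hXdef
  clear_value X
  set Y : ℝ := b₂ - b₄ with hYdef
  clear_value Y
  have hX : |X - σ * (c * d ^ e)| < K * d ^ (e - 1) := by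
    have hKd : K * d ^ (e - 1) = 2 * m * W * d ^ (e - 1) + 2 * d ^ (e - 1) := by
      rw [hKdef]; ring
    rw [abs_lt] at h₁ h₃ ⊢
    rw [abs_le] at hkeyA
    constructor <;> [linarith [hkeyA.1, h₁.2, h₃.1, hde1]; linarith [hkeyA.2, h₁.1, h₃.2, hde1]]
  have hY : |Y - σ * d ^ e| < K * d ^ (e - 1) := by
    have hKd : K * d ^ (e - 1) = 2 * m * W * d ^ (e - 1) + 2 * d ^ (e - 1) := by
      rw [hKdef]; ring
    rw [abs_lt] at h₂ h₄ ⊢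
    rw [abs_le] at hkeyB
    constructor <;> [linarith [hkeyB.1, h₂.2, h₄.1, hde1]; linarith [hkeyB.2, h₂.1, h₄.2, hde1]]
  have hσabs : |σ| = 1 := by
    rw [hσdef]; cases η₁ k <;> simp
  have hKsmall : K * d ^ (e - 1) < d ^ e / 2 := by
    rw [hpow]
    have : (0:ℝ) < d ^ (e - 1) := by positivity
    nlinarith
  have hYbig : d ^ e / 2 < |Y| := by
    have h1 : |σ * d ^ e| = d ^ e := by
      rw [abs_mul, hσabs, one_mul, abs_pow, abs_of_pos hd0]
    have h2 : |σ * d ^ e| - |Y - σ * d ^ e| ≤ |Y| := by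
      have := abs_sub_abs_le_abs_sub (σ * d ^ e) (Y - σ * d ^ e)
      have h3 : σ * d ^ e - (Y - σ * d ^ e) = 2 * (σ * d ^ e) - Y := by ring
      -- simpler: |Y| ≥ |σ d^e| - |σ d^e - Y|
      calc |σ * d ^ e| - |Y - σ * d ^ e| = |σ * d ^ e| - |σ * d ^ e - Y| := by
            rw [abs_sub_comm]
        _ ≤ |Y| := by
            have := abs_sub_abs_le_abs_sub (σ * d ^ e) Y
            linarith
    rw [h1] at h2
    linarith
  have hYpos : 0 < |Y| := by linarith
  have hYne : Y ≠ 0 := abs_pos.mp hYpos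
  have hnum : |X - c * Y| < (1 + W) * K * d ^ (e - 1) := by
    have hsplit : X - c * Y = (X - σ * (c * d ^ e)) + (-c) * (Y - σ * d ^ e) := by ring
    calc |X - c * Y| ≤ |X - σ * (c * d ^ e)| + |(-c) * (Y - σ * d ^ e)| := by
          rw [hsplit]; exact abs_add_le _ _
      _ = |X - σ * (c * d ^ e)| + |c| * |Y - σ * d ^ e| := by
          rw [abs_mul, abs_neg]
      _ < K * d ^ (e - 1) + W * (K * d ^ (e - 1)) := by
          have h1 : |c| * |Y - σ * d ^ e| ≤ W * |Y - σ * d ^ e| :=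
            mul_le_mul_of_nonneg_right hcW (abs_nonneg _)
          have h2 : W * |Y - σ * d ^ e| < W * (K * d ^ (e - 1)) :=
            (mul_lt_mul_iff_right₀ (by linarith)).mpr hY
          linarith
      _ = (1 + W) * K * d ^ (e - 1) := by ring
  have hratio : |X / Y - c| < ε := by
    have heq : X / Y - c = (X - c * Y) / Y := by field_simp
    rw [heq, abs_div, div_lt_iff₀ hYpos]
    calc |X - c * Y| < (1 + W) * K * d ^ (e - 1) := hnum
      _ < ε * (d ^ e / 2) := by
          rw [hpow]
          have h3 : (0:ℝ) < d ^ (e - 1) := by positivity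
          nlinarith
      _ ≤ ε * |Y| := mul_le_mul_of_nonneg_left hYbig.le hε.le
  rw [abs_lt] at hratio
  have hεk' := hεk k
  refine ⟨hYne, ?_, ?_⟩
  · have : c - (v k - u k) / 2 = u k := by rw [hcdef]; ring
    linarith
  · have : c + (v k - u k) / 2 = v k := by rw [hcdef]; ring
    linarith
end

section
/- Every generalized Boolean algebra of finite type is isomorphic, as a generalized Boolean algebra (equivalently, order-isomorphic), to the lattice of finite subsets of some type; concretely, if B is a generalized Boolean algebra of finite type then there is an order isomorphism between B and Finset {a : B // a is an atom}. -/
lemma atom_le_finsetSup {B : Type*} [GeneralizedBooleanAlgebra B] {ι : Type*} {a : B}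
    (ha : IsAtom a) {s : Finset ι} {f : ι → B} (h : a ≤ s.sup f) : ∃ x ∈ s, a ≤ f x := by
  by_contra hc
  push_neg at hc
  have hbot : a ⊓ s.sup f = ⊥ := by
    rw [Finset.sup_inf_distrib_left s f a, Finset.sup_eq_bot_iff]
    intro x hx
    rcases ha.le_iff.mp (inf_le_left : a ⊓ f x ≤ a) with h' | h'
    · exact h'
    · exact absurd (h' ▸ (inf_le_right : a ⊓ f x ≤ f x)) (hc x hx)
  rw [inf_eq_left.mpr h] at hbot
  exact ha.1 hbot

/-- Every generalized Boolean algebra of finite type (every element is the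
supremum of a finite set of atoms) is order-isomorphic to the generalized Boolean algebra
of finite subsets of its set of atoms. -/
theorem genBoolAlg_finiteType_iso_finsetAtoms (B : Type*) [GeneralizedBooleanAlgebra B]
    (hB : ∀ b : B, ∃ s : Finset B, (∀ a ∈ s, IsAtom a) ∧ s.sup id = b) :
    Nonempty (B ≃o Finset {a : B // IsAtom a}) := by
  classical
  set A := {a : B // IsAtom a}
  let f : B → Finset A := fun b =>
    ((hB b).choose.subtype IsAtom).filter (fun a => (a : B) ≤ b)
  have hmemf : ∀ (b : B) (a : A), a ∈ f b ↔ (a : B) ≤ b := by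
    intro b a
    simp only [f, Finset.mem_filter, Finset.mem_subtype, and_iff_right_iff_imp]
    intro hle
    obtain ⟨hatoms, hsup⟩ := (hB b).choose_spec
    obtain ⟨x, hx, hax⟩ := atom_le_finsetSup a.2 (hsup ▸ hle)
    rcases (hatoms x hx).le_iff.mp (hax : (a : B) ≤ x) with h' | h'
    · exact absurd h' a.2.1
    · rw [Finset.mem_subtype, h']; exact hx
  let g : Finset A → B := fun t => t.sup (fun a => (a : B))
  have hgf : ∀ b, g (f b) = b := by
    intro b
    apply le_antisymm
    · exact Finset.sup_le fun a ha => (hmemf b a).mp ha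
    · obtain ⟨hatoms, hsup⟩ := (hB b).choose_spec
      conv_lhs => rw [← hsup]
      apply Finset.sup_le
      intro x hx
      exact Finset.le_sup (f := fun a : A => (a : B))
        ((hmemf b ⟨x, hatoms x hx⟩).mpr (hsup ▸ Finset.le_sup (f := id) hx))
  have hfg : ∀ t, f (g t) = t := by
    intro t
    ext a
    rw [hmemf]
    constructor
    · intro hle
      obtain ⟨x, hx, hax⟩ := atom_le_finsetSup a.2 hle
      rcases x.2.le_iff.mp hax with h' | h'
      · exact absurd h' a.2.1
      · exact (Subtype.ext h') ▸ hx
    · intro ha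
      exact Finset.le_sup ha
  refine ⟨{ toFun := f, invFun := g, left_inv := hgf, right_inv := hfg,
            map_rel_iff' := ?_ }⟩
  intro b c
  show f b ≤ f c ↔ b ≤ c
  constructor
  · intro h
    rw [← hgf b]
    exact Finset.sup_le fun a ha => (hmemf c a).mp (h ha)
  · intro h a ha
    exact (hmemf c a).mpr (((hmemf b a).mp ha).trans h)
end

section
/- Let A and B be generalized Boolean algebras of finite type, let C be a generalized Boolean algebra, and let f : C → A and g : C → B be injective lattice homomorphisms with f(⊥) = ⊥ and g(⊥) = ⊥ (such maps automatically preserve relative complements). Assume: (i) for every c ∈ C, the (finite) number of atoms of A below f(c) equals the number of atoms of B below g(c); and (ii) the cardinality of the set of atoms of A that are not below f(c) for any c ∈ C equals the cardinality of the set of atoms of B that are not below g(c) for any c ∈ C. Then there is an isomorphism h : A → B of generalized Boolean algebras (an order isomorphism) such that h ∘ f = g. -/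
/-!
Record each atom `a` of `A` by its trace `f ⁻¹' Ici a = {c | a ≤ f c}`. The trace is an
inf-closed upper set, and the lower intervals of `C` are finite because `f` embeds them into
those of `A`; hence every nonempty trace is principal, `Ici m`. The atoms below `f c` are thus
partitioned according to the `m ≤ c`, so well-founded induction on `m` turns the equal atom
counts below `f c` and `g c` into equal counts of atoms with trace `Ici m` in `A` and in `B`.
With the hypothesis on atoms of empty trace, this yields a trace-preserving bijection between
the atoms of `A` and `B`, which extends to an order isomorphism because each algebra is
isomorphic to the lattice of finite sets of its atoms.
-/

abbrev Atoms (A : Type*) [Preorder A] [OrderBot A] := {a : A // IsAtom a}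

def IsFiniteType (A : Type*) [SemilatticeSup A] [OrderBot A] : Prop :=
  ∀ x : A, ∃ s : Finset A, (∀ a ∈ s, IsAtom a) ∧ s.sup id = x

theorem IsAtom.supPrime {A : Type*} [DistribLattice A] [OrderBot A] {a : A} (ha : IsAtom a) :
    SupPrime a := by
  refine ⟨fun hmin => ha.1 hmin.eq_bot, fun {b c} hle => ?_⟩
  by_contra! hbc
  have hdisj := (ha.not_le_iff_disjoint.1 hbc.1).sup_right (ha.not_le_iff_disjoint.1 hbc.2)
  exact ha.1 (hdisj.eq_bot_of_le hle)

theorem Atoms.coe_le_finset_sup_val_iff {A : Type*} [DistribLattice A] [OrderBot A]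
    {a : Atoms A} {s : Finset (Atoms A)} : (a : A) ≤ s.sup Subtype.val ↔ a ∈ s := by
  refine ⟨fun h => ?_, fun h => Finset.le_sup (f := Subtype.val) h⟩
  obtain ⟨b, hb, hab⟩ := a.2.supPrime.le_finset_sup.1 h
  rwa [Subtype.ext ((b.2.le_iff.1 hab).resolve_left a.2.1)]

namespace IsFiniteType

variable {A : Type*} [DistribLattice A] [OrderBot A] (hA : IsFiniteType A)
include hA

theorem le_of_forall_atom_le {x y : A} (h : ∀ a, IsAtom a → a ≤ x → a ≤ y) : x ≤ y := by
  obtain ⟨s, hs, rfl⟩ := hA x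
  exact Finset.sup_le fun a ha => h a (hs a ha) (Finset.le_sup (f := id) ha)

theorem ext_atoms {x y : A} (h : ∀ a, IsAtom a → (a ≤ x ↔ a ≤ y)) : x = y :=
  le_antisymm (hA.le_of_forall_atom_le fun a ha => (h a ha).1)
    (hA.le_of_forall_atom_le fun a ha => (h a ha).2)

theorem finite_atoms_le (x : A) : {a : Atoms A | (a : A) ≤ x}.Finite := by
  obtain ⟨s, hs, rfl⟩ := hA x
  refine (s.finite_toSet.preimage Subtype.val_injective.injOn).subset fun a ha => ?_
  obtain ⟨b, hb, hab⟩ := a.2.supPrime.le_finset_sup.1 ha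
  rwa [Set.mem_preimage, (hs b hb |>.le_iff.1 hab).resolve_left a.2.1]

noncomputable def atomsLE (x : A) : Finset (Atoms A) := (hA.finite_atoms_le x).toFinset

@[simp]
theorem mem_atomsLE {x : A} {a : Atoms A} : a ∈ hA.atomsLE x ↔ (a : A) ≤ x :=
  Set.Finite.mem_toFinset _

noncomputable def orderIsoFinsetAtoms : A ≃o Finset (Atoms A) where
  toFun := hA.atomsLE
  invFun s := s.sup Subtype.val
  left_inv x := le_antisymm (Finset.sup_le fun a ha => (hA.mem_atomsLE.1 ha))
    (hA.le_of_forall_atom_le fun a ha hax =>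
      Atoms.coe_le_finset_sup_val_iff (a := ⟨a, ha⟩).2 (hA.mem_atomsLE.2 hax))
  right_inv s := Finset.ext fun a => by rw [mem_atomsLE, Atoms.coe_le_finset_sup_val_iff]
  map_rel_iff' := ⟨fun h => hA.le_of_forall_atom_le fun a ha hax =>
      hA.mem_atomsLE.1 (h ((hA.mem_atomsLE (a := ⟨a, ha⟩)).2 hax)),
    fun h _ ha => hA.mem_atomsLE.2 ((hA.mem_atomsLE.1 ha).trans h)⟩

theorem finite_Iic (x : A) : (Set.Iic x).Finite := by
  classical
  have := (Set.finite_Iic (hA.orderIsoFinsetAtoms x)).preimage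
    hA.orderIsoFinsetAtoms.injective.injOn
  rwa [OrderIso.preimage_Iic, OrderIso.symm_apply_apply] at this

variable {B : Type*} [DistribLattice B] [OrderBot B] (hB : IsFiniteType B)

noncomputable def orderIsoOfAtomsEquiv (σ : Atoms A ≃ Atoms B) : A ≃o B :=
  hA.orderIsoFinsetAtoms.trans <|
    ({ σ.finsetCongr with map_rel_iff' := by simp } : Finset (Atoms A) ≃o Finset (Atoms B)).trans
      hB.orderIsoFinsetAtoms.symm

theorem le_orderIsoOfAtomsEquiv_iff (σ : Atoms A ≃ Atoms B) {x : A} {b : Atoms B} :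
    (b : B) ≤ orderIsoOfAtomsEquiv hA hB σ x ↔ (σ.symm b : A) ≤ x := by
  change (b : B) ≤ (Finset.map σ.toEmbedding (hA.atomsLE x)).sup Subtype.val ↔ _
  rw [Atoms.coe_le_finset_sup_val_iff, Finset.mem_map_equiv, mem_atomsLE]

end IsFiniteType

theorem wellFoundedLT_of_finite_Iic {C : Type*} [PartialOrder C]
    (h : ∀ c : C, (Set.Iic c).Finite) : WellFoundedLT C :=
  ⟨Subrelation.wf (fun {_ c} hlt => Set.ncard_lt_ncard (Set.Iic_ssubset_Iic.2 hlt) (h c))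
    (measure fun c : C => (Set.Iic c).ncard).wf⟩

theorem IsUpperSet.exists_eq_Ici_of_infClosed {C : Type*} [SemilatticeInf C] {S : Set C}
    (hup : IsUpperSet S) (hinf : InfClosed S) {c : C} (hc : c ∈ S) (hfin : (Set.Iic c).Finite) :
    ∃ m, S = Set.Ici m := by
  have hT : (S ∩ Set.Iic c).Finite := hfin.subset Set.inter_subset_right
  have hne : hT.toFinset.Nonempty := ⟨c, by simp [hc]⟩
  have hm : hT.toFinset.inf' hne id ∈ S ∩ Set.Iic c :=
    (hinf.inter (isLowerSet_Iic c).infClosed).finsetInf'_mem hne fun x hx => by simpa using hx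
  refine ⟨hT.toFinset.inf' hne id, Set.Subset.antisymm (fun x hx => ?_) fun x hx => hup hx hm.1⟩
  have hmx : hT.toFinset.inf' hne id ⊓ x ∈ hT.toFinset := by
    simpa using ⟨hinf hm.1 hx, inf_le_left.trans hm.2⟩
  exact (Finset.inf'_le id hmx).trans inf_le_right

abbrev atomFiber {A C : Type*} [Preorder A] [OrderBot A] (f : C → A) (s : Set C) :=
  {a : Atoms A // f ⁻¹' Set.Ici (a : A) = s}

def atomFiberEmptyEquiv {C D : Type*} [Preorder D] [OrderBot D] (e : C → D) :
    atomFiber e ∅ ≃ {d : D // IsAtom d ∧ ∀ c, ¬ d ≤ e c} :=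
  (Equiv.subtypeEquivRight fun _ => Set.eq_empty_iff_forall_notMem).trans
    (Equiv.subtypeSubtypeEquivSubtypeInter IsAtom fun d => ∀ c, ¬ d ≤ e c)

section Embedding

variable {A C F : Type*} [DistribLattice A] [OrderBot A] [SemilatticeInf C] [FunLike F C A]
  [InfHomClass F C A]

theorem IsFiniteType.finite_atomFiber_Ici (hA : IsFiniteType A) (f : C → A) (m : C) :
    Finite (atomFiber f (Set.Ici m)) :=
  Set.Finite.to_subtype <| (hA.finite_atoms_le (f m)).subset fun a (ha : _ = _) =>
    show m ∈ f ⁻¹' Set.Ici (a : A) from ha ▸ Set.mem_Ici.2 le_rfl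

variable (hA : IsFiniteType A) {f : F} (hf : Function.Injective f)
include hA hf

theorem IsFiniteType.finite_Iic_of_injective (c : C) : (Set.Iic c).Finite :=
  ((hA.finite_Iic (f c)).preimage hf.injOn).subset fun _ h => OrderHomClass.mono f h

theorem IsFiniteType.exists_preimage_Ici_eq_Ici {x : A} (hx : (f ⁻¹' Set.Ici x).Nonempty) :
    ∃ m, f ⁻¹' Set.Ici x = Set.Ici m :=
  ((isUpperSet_Ici x).preimage (OrderHomClass.mono f)).exists_eq_Ici_of_infClosed
    (InfClosed.preimage (fun _ ha _ hb => le_inf ha hb) f) hx.some_mem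
    (hA.finite_Iic_of_injective hf _)

theorem IsFiniteType.card_atoms_le_eq_sum (c : C) :
    Nat.card {a : A // IsAtom a ∧ a ≤ f c} =
      ∑ m ∈ (hA.finite_Iic_of_injective hf c).toFinset, Nat.card (atomFiber f (Set.Ici m)) := by
  have := hA.finite_atomFiber_Ici f
  rw [← Finset.sum_coe_sort, ← Nat.card_sigma]
  let toAtom : (Σ m : (hA.finite_Iic_of_injective hf c).toFinset,
      atomFiber f (Set.Ici (m : C))) → {a : A // IsAtom a ∧ a ≤ f c} :=
    fun ⟨m, a, ha⟩ => ⟨a, a.2,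
      (show m.1 ∈ f ⁻¹' Set.Ici (a : A) from ha ▸ Set.mem_Ici.2 le_rfl).trans
        (OrderHomClass.mono f
          ((Set.Finite.mem_toFinset (hA.finite_Iic_of_injective hf c)).1 m.2))⟩
  refine (Nat.card_congr (Equiv.ofBijective toAtom ⟨?_, ?_⟩)).symm
  · rintro ⟨m, a, ha⟩ ⟨m', a', ha'⟩ h
    have haa' : a = a' := Subtype.ext (Subtype.mk.inj h)
    subst haa'
    exact Sigma.subtype_ext (Subtype.ext (Set.Ici_inj.1 (ha.symm.trans ha'))) rfl
  · rintro ⟨a, ha, hac⟩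
    obtain ⟨m, hm⟩ := hA.exists_preimage_Ici_eq_Ici hf ⟨c, hac⟩
    have hmc : m ≤ c := (show c ∈ Set.Ici m from hm ▸ hac)
    exact ⟨⟨⟨m, by simpa using hmc⟩, ⟨a, ha⟩, hm⟩, rfl⟩

theorem IsFiniteType.isEmpty_atomFiber {s : Set C} (hs : s.Nonempty)
    (hs' : ¬ ∃ m, s = Set.Ici m) : IsEmpty (atomFiber f s) :=
  ⟨fun ⟨_, ha⟩ => by
    obtain ⟨m, hm⟩ := hA.exists_preimage_Ici_eq_Ici hf (ha ▸ hs)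
    exact hs' ⟨m, ha ▸ hm⟩⟩

end Embedding

section Amalgamation

variable {A B C F G : Type*} [DistribLattice A] [OrderBot A] [DistribLattice B] [OrderBot B]
  [SemilatticeInf C] [FunLike F C A] [InfHomClass F C A] [FunLike G C B] [InfHomClass G C B]
  (hA : IsFiniteType A) (hB : IsFiniteType B) {f : F} {g : G}
  (hf : Function.Injective f) (hg : Function.Injective g)
include hA hB hf hg

theorem card_atomFiber_Ici_eq
    (hcount : ∀ c : C,
      Nat.card {a : A // IsAtom a ∧ a ≤ f c} = Nat.card {b : B // IsAtom b ∧ b ≤ g c})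
    (m : C) :
    Nat.card (atomFiber f (Set.Ici m)) = Nat.card (atomFiber g (Set.Ici m)) := by
  classical
  have := wellFoundedLT_of_finite_Iic (hA.finite_Iic_of_injective hf)
  induction m using WellFoundedLT.induction with
  | _ m ih =>
  have hm : m ∈ (hA.finite_Iic_of_injective hf m).toFinset := by simp
  have hsplit := hA.card_atoms_le_eq_sum hf m
  rw [hcount, hB.card_atoms_le_eq_sum hg m, ← Finset.sum_erase_add _ _ hm,
    ← Finset.sum_erase_add _ _ hm] at hsplit
  have hlower : ∀ m' ∈ (hA.finite_Iic_of_injective hf m).toFinset.erase m,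
      Nat.card (atomFiber f (Set.Ici m')) = Nat.card (atomFiber g (Set.Ici m')) := fun m' hm' =>
    ih m' (lt_of_le_of_ne (by simpa using (Finset.mem_erase.1 hm').2) (Finset.mem_erase.1 hm').1)
  rw [Finset.sum_congr rfl hlower] at hsplit
  omega

theorem nonempty_atomFiber_equiv
    (hcount : ∀ c : C,
      Nat.card {a : A // IsAtom a ∧ a ≤ f c} = Nat.card {b : B // IsAtom b ∧ b ≤ g c})
    (hout : Nonempty ({a : A // IsAtom a ∧ ∀ c : C, ¬ a ≤ f c} ≃
      {b : B // IsAtom b ∧ ∀ c : C, ¬ b ≤ g c}))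
    (s : Set C) :
    Nonempty (atomFiber f s ≃ atomFiber g s) := by
  rcases s.eq_empty_or_nonempty with rfl | hs
  · obtain ⟨e⟩ := hout
    exact ⟨(atomFiberEmptyEquiv f).trans (e.trans (atomFiberEmptyEquiv g).symm)⟩
  by_cases hprincipal : ∃ m, s = Set.Ici m
  · obtain ⟨m, rfl⟩ := hprincipal
    have := hA.finite_atomFiber_Ici f m
    have := hB.finite_atomFiber_Ici g m
    exact Finite.card_eq.1 (card_atomFiber_Ici_eq hA hB hf hg hcount m)
  · have := hA.isEmpty_atomFiber hf hs hprincipal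
    have := hB.isEmpty_atomFiber hg hs hprincipal
    exact ⟨Equiv.equivOfIsEmpty _ _⟩

theorem exists_atomsEquiv_preimage_Ici_eq
    (hcount : ∀ c : C,
      Nat.card {a : A // IsAtom a ∧ a ≤ f c} = Nat.card {b : B // IsAtom b ∧ b ≤ g c})
    (hout : Nonempty ({a : A // IsAtom a ∧ ∀ c : C, ¬ a ≤ f c} ≃
      {b : B // IsAtom b ∧ ∀ c : C, ¬ b ≤ g c})) :
    ∃ σ : Atoms A ≃ Atoms B, ∀ a, g ⁻¹' Set.Ici ↑(σ a) = f ⁻¹' Set.Ici ↑a := by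
  let e s := (nonempty_atomFiber_equiv hA hB hf hg hcount hout s).some
  exact ⟨(Equiv.sigmaFiberEquiv _).symm.trans ((Equiv.sigmaCongrRight e).trans
    (Equiv.sigmaFiberEquiv _)), fun a => (e _ ⟨a, rfl⟩).2⟩

end Amalgamation

theorem genBoolAlg_amalgamate_iso_general {A B : Type u} {C : Type v}
    [GeneralizedBooleanAlgebra A] [GeneralizedBooleanAlgebra B] [GeneralizedBooleanAlgebra C]
    (hA : ∀ x : A, ∃ s : Finset A, (∀ a ∈ s, IsAtom a) ∧ s.sup id = x)
    (hB : ∀ x : B, ∃ s : Finset B, (∀ a ∈ s, IsAtom a) ∧ s.sup id = x)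
    (f : LatticeHom C A) (g : LatticeHom C B)
    (hf : Function.Injective f) (hg : Function.Injective g)
    (hcount : ∀ c : C,
      Nat.card {a : A // IsAtom a ∧ a ≤ f c} = Nat.card {b : B // IsAtom b ∧ b ≤ g c})
    (hout : Cardinal.mk {a : A // IsAtom a ∧ ∀ c : C, ¬ a ≤ f c}
          = Cardinal.mk {b : B // IsAtom b ∧ ∀ c : C, ¬ b ≤ g c}) :
    ∃ h : A ≃o B, ∀ c : C, h (f c) = g c := by
  obtain ⟨σ, hσ⟩ := exists_atomsEquiv_preimage_Ici_eq hA hB hf hg hcount (Cardinal.eq.1 hout)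
  refine ⟨IsFiniteType.orderIsoOfAtomsEquiv hA hB σ, fun c =>
    IsFiniteType.ext_atoms hB fun b hb => ?_⟩
  rw [IsFiniteType.le_orderIsoOfAtomsEquiv_iff hA hB σ (b := ⟨b, hb⟩)]
  simpa using (Set.ext_iff.1 (hσ (σ.symm ⟨b, hb⟩)) c).symm

/-- Amalgamation of isomorphisms of generalized Boolean algebras of finite type
over a common sub-generalized-Boolean-algebra.  If `f : C → A` and `g : C → B` are injective
bottom-preserving lattice embeddings, every `f c` and `g c` contain the same (finite) number
of atoms, and the atoms of `A` not below the image of `f` are equinumerous with the atoms of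
`B` not below the image of `g`, then there is an order isomorphism `h : A ≃o B` with
`h ∘ f = g`. -/
theorem genBoolAlg_amalgamate_iso {A B : Type u} {C : Type v}
    [GeneralizedBooleanAlgebra A] [GeneralizedBooleanAlgebra B] [GeneralizedBooleanAlgebra C]
    (hA : ∀ x : A, ∃ s : Finset A, (∀ a ∈ s, IsAtom a) ∧ s.sup id = x)
    (hB : ∀ x : B, ∃ s : Finset B, (∀ a ∈ s, IsAtom a) ∧ s.sup id = x)
    (f : LatticeHom C A) (g : LatticeHom C B)
    (hf : Function.Injective f) (hg : Function.Injective g)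
    (hf0 : f ⊥ = ⊥) (hg0 : g ⊥ = ⊥)
    (hcount : ∀ c : C,
      Nat.card {a : A // IsAtom a ∧ a ≤ f c} = Nat.card {b : B // IsAtom b ∧ b ≤ g c})
    (hout : Cardinal.mk {a : A // IsAtom a ∧ ∀ c : C, ¬ a ≤ f c}
          = Cardinal.mk {b : B // IsAtom b ∧ ∀ c : C, ¬ b ≤ g c}) :
    ∃ h : A ≃o B, ∀ c : C, h (f c) = g c :=
  genBoolAlg_amalgamate_iso_general hA hB f g hf hg hcount hout
end

section
/- Let α be a meet-tree. For all a, b₁, b₂ ∈ α, if a ⊓ b₁ < a ⊓ b₂ then a ⊓ b₁ = b₁ ⊓ b₂. -/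
/-- In a meet-tree (a meet-semilattice in which the set of elements below any
given element is a chain), if `a ⊓ b₁ < a ⊓ b₂` then `a ⊓ b₁ = b₁ ⊓ b₂`. -/
theorem meetTree_meet_eq_of_lt {α : Type*} [SemilatticeInf α]
    (htree : ∀ x : α, IsChain (· ≤ ·) {y : α | y ≤ x})
    (a b₁ b₂ : α) (h : a ⊓ b₁ < a ⊓ b₂) :
    a ⊓ b₁ = b₁ ⊓ b₂ := by
  have h1 : a ⊓ b₁ ≤ b₁ ⊓ b₂ :=
    le_inf inf_le_right (h.le.trans inf_le_right)
  refine le_antisymm h1 ?_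
  rcases eq_or_ne (b₁ ⊓ b₂) (a ⊓ b₂) with he | hne
  · exact le_inf (he ▸ inf_le_left : b₁ ⊓ b₂ ≤ a) inf_le_left
  rcases htree b₂ (show b₁ ⊓ b₂ ∈ _ from inf_le_right)
      (show a ⊓ b₂ ∈ _ from inf_le_right) hne with hc | hc
  · exact le_inf (hc.trans inf_le_left) inf_le_left
  · exact absurd (le_inf inf_le_left (hc.trans inf_le_left)) h.not_ge
end

section
/- Let α be a meet-tree, let A ⊆ α be closed under ⊓, and let a ∈ α. If the set {b ⊓ a | b ∈ A} has a greatest element m, then the set A ∪ {a, m} is closed under ⊓. -/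
/-- In a meet-tree, if `A` is closed under meets and the set `{b ⊓ a | b ∈ A}`
has a greatest element `m`, then `A ∪ {a, m}` is closed under meets. -/
theorem meetTree_closure_insert {α : Type*} [SemilatticeInf α]
    (htree : ∀ x : α, IsChain (· ≤ ·) {y : α | y ≤ x})
    (A : Set α) (hA : ∀ x ∈ A, ∀ y ∈ A, x ⊓ y ∈ A) (a m : α)
    (hm : m ∈ (fun b => b ⊓ a) '' A ∧ ∀ x ∈ (fun b => b ⊓ a) '' A, x ≤ m) :
    ∀ x ∈ A ∪ {a, m}, ∀ y ∈ A ∪ {a, m}, x ⊓ y ∈ A ∪ {a, m} := by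
  obtain ⟨⟨b₀, hb₀A, hb₀m⟩, hmax⟩ := hm
  have tot : ∀ x y z : α, x ≤ z → y ≤ z → x ≤ y ∨ y ≤ x := by
    intro x y z hx hy
    rcases eq_or_ne x y with rfl | hne
    · exact Or.inl le_rfl
    · exact htree z hx hy hne
  have hma : m ≤ a := hb₀m ▸ inf_le_right
  have hmb₀ : m ≤ b₀ := hb₀m ▸ inf_le_left
  have key : ∀ b ∈ A, b ⊓ a ∈ A ∪ {a, m} := by
    intro b hb
    have hle : b ⊓ a ≤ m := hmax _ ⟨b, hb, rfl⟩
    rcases tot m (b ⊓ b₀) b₀ hmb₀ inf_le_right with h | h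
    · have : b ⊓ a = m :=
        le_antisymm hle (le_inf (h.trans inf_le_left) hma)
      right; right; exact this
    · have : b ⊓ a = b ⊓ b₀ :=
        le_antisymm (le_inf inf_le_left (hle.trans hmb₀))
          (le_inf inf_le_left (le_trans h hma))
      left; rw [this]; exact hA b hb b₀ hb₀A
  have keym : ∀ b ∈ A, b ⊓ m = b ⊓ a := fun b hb =>
    le_antisymm (inf_le_inf_left b hma)
      (le_inf inf_le_left (hmax _ ⟨b, hb, rfl⟩))
  intro x hx y hy
  rcases hx with hx | rfl | rfl <;> rcases hy with hy | rfl | rfl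
  · exact Or.inl (hA x hx y hy)
  · exact key x hx
  · rw [keym x hx]; exact key x hx
  · rw [inf_comm]; exact key y hy
  · right; left; simp
  · right; right; exact inf_eq_right.mpr hma
  · rw [inf_comm, keym y hy]; exact key y hy
  · right; right; exact inf_eq_left.mpr hma
  · right; right; simp
end

section
/- Let (α, <) be a nonempty dense linear order without endpoints (for instance ℚ). For x, y ∈ α write I(x,y) = {c | x < c < y or y < c < x} (the open interval between x and y, irrespective of their order). Then for all a, b, w, z ∈ α with a < b and w ≠ z: w < z if and only if either (I(a,b) ∩ I(a,z) ≠ ∅ and (I(a,w) ⊆ I(a,z) or I(a,w) ∩ I(a,z) = ∅)) or (I(a,b) ∩ I(a,z) = ∅ and I(z,b) ⊆ I(w,b)). In particular, the linear order on α is uniquely determined by the betweenness relation R(x,y,z) ⟺ (x<y<z or z<y<x) together with any one pair a < b. -/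
/-- The open interval between `x` and `y`, irrespective of their order. -/
def btwInterval {α : Type*} [LT α] (x y : α) : Set α :=
  {c | (x < c ∧ c < y) ∨ (y < c ∧ c < x)}

/-- In a nonempty dense linear order without endpoints, the order relation is
recovered from the betweenness intervals together with one fixed pair `a < b`:
for `w ≠ z`, `w < z` iff either (`I(a,b) ∩ I(a,z) ≠ ∅` and (`I(a,w) ⊆ I(a,z)` or
`I(a,w) ∩ I(a,z) = ∅`)), or (`I(a,b) ∩ I(a,z) = ∅` and `I(z,b) ⊆ I(w,b)`). -/
theorem lt_iff_betweenness {α : Type*} [LinearOrder α] [DenselyOrdered α]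
    [NoMinOrder α] [NoMaxOrder α] [Nonempty α]
    (a b w z : α) (hab : a < b) (hwz : w ≠ z) :
    w < z ↔
      ((btwInterval a b ∩ btwInterval a z).Nonempty ∧
        (btwInterval a w ⊆ btwInterval a z ∨ btwInterval a w ∩ btwInterval a z = ∅)) ∨
      (btwInterval a b ∩ btwInterval a z = ∅ ∧ btwInterval z b ⊆ btwInterval w b) := by
  constructor
  · intro h
    rcases le_or_gt z a with hza | haz
    · right
      constructor
      · ext c
        simp only [btwInterval, Set.mem_inter_iff, Set.mem_setOf_eq,
          Set.mem_empty_iff_false, iff_false, not_and]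
        rintro (⟨h1, h2⟩ | ⟨h1, h2⟩)
        · rintro (⟨h3, h4⟩ | ⟨h3, h4⟩)
          · exact absurd (h4.trans_le hza) (lt_asymm h1)
          · exact absurd h4 (lt_asymm h1)
        · exact absurd (h2.trans hab) (lt_asymm h1)
      · intro c hc
        simp only [btwInterval, Set.mem_setOf_eq] at *
        rcases hc with ⟨h1, h2⟩ | ⟨h1, h2⟩
        · exact Or.inl ⟨h.trans h1, h2⟩
        · exact absurd (h1.trans h2) (lt_asymm (hza.trans_lt hab))
    · left
      constructor
      · obtain ⟨c, hc1, hc2⟩ := exists_between (lt_min hab haz)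
        exact ⟨c, Or.inl ⟨hc1, hc2.trans_le (min_le_left _ _)⟩,
          Or.inl ⟨hc1, hc2.trans_le (min_le_right _ _)⟩⟩
      · rcases le_or_gt w a with hwa | haw
        · right
          ext c
          simp only [btwInterval, Set.mem_inter_iff, Set.mem_setOf_eq,
            Set.mem_empty_iff_false, iff_false, not_and]
          rintro (⟨h1, h2⟩ | ⟨h1, h2⟩)
          · exact absurd (h2.trans_le hwa) (lt_asymm h1)
          · rintro (⟨h3, h4⟩ | ⟨h3, h4⟩)
            · exact absurd h3 (lt_asymm h2)
            · exact absurd (haz.trans h3) (lt_asymm h2)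
        · left
          intro c hc
          simp only [btwInterval, Set.mem_setOf_eq] at *
          rcases hc with ⟨h1, h2⟩ | ⟨h1, h2⟩
          · exact Or.inl ⟨h1, h2.trans h⟩
          · exact absurd (h2.trans haw) (lt_asymm h1)
  · intro h
    by_contra hlt
    have hzw : z < w := (hwz.lt_or_gt).resolve_left hlt
    rcases h with ⟨⟨c, hc1, hc2⟩, hsub⟩ | ⟨hempty, hsub⟩
    · simp only [btwInterval, Set.mem_setOf_eq] at hc1 hc2
      have hac : a < c := by
        rcases hc1 with ⟨h1, _⟩ | ⟨h1, h2⟩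
        · exact h1
        · exact absurd (hab.trans h1) (lt_asymm h2)
      have haz : a < z := by
        rcases hc2 with ⟨_, h2⟩ | ⟨_, h2⟩
        · exact hac.trans h2
        · exact absurd h2 (lt_asymm hac)
      rcases hsub with hsub | hsub
      · obtain ⟨d, hd1, hd2⟩ := exists_between hzw
        have hd : d ∈ btwInterval a w := Or.inl ⟨haz.trans hd1, hd2⟩
        rcases hsub hd with ⟨h1, h2⟩ | ⟨h1, h2⟩
        · exact absurd h2 (lt_asymm hd1)
        · exact absurd (haz.trans hd1) (lt_asymm h2)
      · obtain ⟨e, he1, he2⟩ := exists_between haz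
        have : e ∈ btwInterval a w ∩ btwInterval a z :=
          ⟨Or.inl ⟨he1, he2.trans hzw⟩, Or.inl ⟨he1, he2⟩⟩
        rw [hsub] at this
        exact this
    · have hza : z ≤ a := by
        by_contra hza
        push_neg at hza
        obtain ⟨c, hc1, hc2⟩ := exists_between (lt_min hab hza)
        have : c ∈ btwInterval a b ∩ btwInterval a z :=
          ⟨Or.inl ⟨hc1, hc2.trans_le (min_le_left _ _)⟩,
           Or.inl ⟨hc1, hc2.trans_le (min_le_right _ _)⟩⟩
        rw [hempty] at this
        exact this
      obtain ⟨c, hc1, hc2⟩ := exists_between (lt_min hzw (hza.trans_lt hab))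
      have hc : c ∈ btwInterval z b := Or.inl ⟨hc1, hc2.trans_le (min_le_right _ _)⟩
      rcases hsub hc with ⟨h1, h2⟩ | ⟨h1, h2⟩
      · exact absurd (hc2.trans_le (min_le_left _ _)) (lt_asymm h1)
      · exact absurd (hc2.trans_le (min_le_right _ _)) (lt_asymm h1)
end

section
/- For every n < ω, the class of models of T_n^∀ has the joint embedding property and the amalgamation property: (JEP) any two models of T_n^∀ admit L_n-embeddings into a common model of T_n^∀; (AP) for any models A, B, C of T_n^∀ and L_n-embeddings f : A → B and g : A → C, there exist a model D of T_n^∀ and L_n-embeddings f′ : B → D and g′ : C → D with f′ ∘ f = g′ ∘ g. Here an L_n-embedding is an injective map that preserves and reflects each predicate P_η and relation <_η and commutes with all the functions ∧_η and G_{η,ν}. -/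
/-- An `L_n`-structure-candidate for the theory `T_n^∀`: carries data for the symbols of
`L_n` (only the data for sequences `η` of length at most `n`, resp. `< n` for the
functions `G`, is relevant). -/
structure TreeModelN (n : ℕ) where
  carrier : Type
  P : List Bool → carrier → Prop
  lt : List Bool → carrier → carrier → Prop
  meet : List Bool → carrier → carrier → carrier
  G : List Bool → Bool → carrier → carrier

/-- `M` is a model of the universal theory `T_n^∀` (in the language `L_n`, whose symbols
are indexed by binary sequences of length `≤ n`). -/
structure IsModelN (n : ℕ) (M : TreeModelN n) : Prop where
  disj : ∀ η ν : List Bool, η.length ≤ n → ν.length ≤ n → η ≠ ν →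
    ∀ x, M.P η x → ¬ M.P ν x
  lt_mem : ∀ η, η.length ≤ n → ∀ x y, M.lt η x y → M.P η x ∧ M.P η y
  lt_irrefl : ∀ η, η.length ≤ n → ∀ x, ¬ M.lt η x x
  lt_trans : ∀ η, η.length ≤ n → ∀ x y z, M.lt η x y → M.lt η y z → M.lt η x z
  pred_linear : ∀ η, η.length ≤ n → ∀ x, M.P η x →
    ∀ y z, M.lt η y x → M.lt η z x → M.lt η y z ∨ M.lt η z y ∨ y = z
  meet_mem : ∀ η, η.length ≤ n → ∀ x y, M.P η x → M.P η y → M.P η (M.meet η x y)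
  meet_le_left : ∀ η, η.length ≤ n → ∀ x y, M.P η x → M.P η y →
    M.lt η (M.meet η x y) x ∨ M.meet η x y = x
  meet_le_right : ∀ η, η.length ≤ n → ∀ x y, M.P η x → M.P η y →
    M.lt η (M.meet η x y) y ∨ M.meet η x y = y
  meet_glb : ∀ η, η.length ≤ n → ∀ x y z, M.P η x → M.P η y → M.P η z →
    (M.lt η z x ∨ z = x) → (M.lt η z y ∨ z = y) →
    M.lt η z (M.meet η x y) ∨ z = M.meet η x y
  meet_id : ∀ η, η.length ≤ n → ∀ x y, ¬ M.P η x → M.meet η x y = x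
  G_mem : ∀ η, η.length < n → ∀ (i : Bool) x, M.P η x → M.P (η ++ [i]) (M.G η i x)
  G_id : ∀ η, η.length < n → ∀ (i : Bool) x, ¬ M.P η x → M.G η i x = x

/-- An `L_n`-embedding between models of `T_n^∀`: an injective map preserving and
reflecting each predicate `P_η` and relation `<_η` and commuting with the functions `∧_η`
and `G_{η,η⌢⟨i⟩}` (for the symbols of `L_n`, i.e. `η` of length `≤ n`, resp. `< n`). -/
def IsEmbN (n : ℕ) (M N : TreeModelN n) (f : M.carrier → N.carrier) : Prop :=
  Function.Injective f ∧
  (∀ η : List Bool, η.length ≤ n → ∀ x, N.P η (f x) ↔ M.P η x) ∧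
  (∀ η : List Bool, η.length ≤ n → ∀ x y, N.lt η (f x) (f y) ↔ M.lt η x y) ∧
  (∀ η : List Bool, η.length ≤ n → ∀ x y, f (M.meet η x y) = N.meet η (f x) (f y)) ∧
  (∀ η : List Bool, η.length < n → ∀ (i : Bool) x, f (M.G η i x) = N.G η i (f x))

/-!
Joint embedding is amalgamation over the empty model. To amalgamate `B ← A → C`, fix a sort `η`
and preorder `B ⊔ C` by `AmalgLE η`: it extends the orders of `B` and `C`, identifies `f a` with
`g a`, and passes between `B` and `C` only through points of `A`, except that inside a gap of `A`
bounded above the points of `C` are put below those of `B`. Because `A` is closed under meets, the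
points below any point form a chain, and the principal lower set of `b ∧ b'` is the intersection
of those of `b` and `b'`. So the lower chains of this preorder, ordered by inclusion with
intersection as meet, form the sort `η` of an amalgam into which `B` and `C` embed by principal
lower sets.
-/

variable {n : ℕ}

namespace TreeModelN

def le (M : TreeModelN n) (η : List Bool) (x y : M.carrier) : Prop :=
  M.lt η x y ∨ x = y

theorem le_refl (M : TreeModelN n) (η : List Bool) (x : M.carrier) : M.le η x x :=
  Or.inr rfl

def empty (n : ℕ) : TreeModelN n where
  carrier := Empty
  P _ _ := False
  lt _ _ _ := False
  meet _ x _ := x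
  G _ _ x := x

theorem isModelN_empty : IsModelN n (empty n) := by
  constructor <;> intros <;> contradiction

end TreeModelN

namespace IsModelN

variable {M : TreeModelN n} {η : List Bool} {x y z : M.carrier}

theorem le_trans (hM : IsModelN n M) (hη : η.length ≤ n) (hxy : M.le η x y)
    (hyz : M.le η y z) : M.le η x z := by
  rcases hxy with hxy | rfl
  · rcases hyz with hyz | rfl
    · exact Or.inl (hM.lt_trans η hη x y z hxy hyz)
    · exact Or.inl hxy
  · exact hyz

theorem le_antisymm (hM : IsModelN n M) (hη : η.length ≤ n) (hxy : M.le η x y)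
    (hyx : M.le η y x) : x = y := by
  rcases hxy with hxy | rfl
  · rcases hyx with hyx | rfl
    · exact absurd (hM.lt_trans η hη x y x hxy hyx) (hM.lt_irrefl η hη x)
    · rfl
  · rfl

theorem le_total_of_le (hM : IsModelN n M) (hη : η.length ≤ n) (hxz : M.le η x z)
    (hyz : M.le η y z) : M.le η x y ∨ M.le η y x := by
  rcases hxz with hxz | rfl
  · rcases hyz with hyz | rfl
    · rcases hM.pred_linear η hη z (hM.lt_mem η hη x z hxz).2 x y hxz hyz with h | h | rfl
      exacts [Or.inl (Or.inl h), Or.inr (Or.inl h), Or.inl (M.le_refl η x)]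
    · exact Or.inl (Or.inl hxz)
  · exact Or.inr hyz

theorem P_of_le (hM : IsModelN n M) (hη : η.length ≤ n) (hxy : M.le η x y) (hy : M.P η y) :
    M.P η x := by
  rcases hxy with hxy | rfl
  exacts [(hM.lt_mem η hη x y hxy).1, hy]

theorem eq_of_le_of_not_P (hM : IsModelN n M) (hη : η.length ≤ n) (hxy : M.le η x y)
    (hy : ¬ M.P η y) : x = y :=
  hxy.resolve_left fun h => hy (hM.lt_mem η hη x y h).2

theorem lt_iff_P_and_le_not_ge (hM : IsModelN n M) (hη : η.length ≤ n) :
    M.lt η x y ↔ M.P η x ∧ M.P η y ∧ M.le η x y ∧ ¬ M.le η y x := by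
  refine ⟨fun h => ⟨(hM.lt_mem η hη x y h).1, (hM.lt_mem η hη x y h).2, Or.inl h, fun hyx => ?_⟩,
    fun ⟨_, _, hxy, hyx⟩ => ?_⟩
  · obtain rfl := hM.le_antisymm hη (Or.inl h) hyx
    exact hM.lt_irrefl η hη x h
  · rcases hxy with h | rfl
    exacts [h, absurd (M.le_refl η x) hyx]

theorem le_meet (hM : IsModelN n M) (hη : η.length ≤ n) (hxy : M.le η x y)
    (hxz : M.le η x z) : M.le η x (M.meet η y z) := by
  by_cases hy : M.P η y
  · by_cases hz : M.P η z
    · exact hM.meet_glb η hη y z x hy hz (hM.P_of_le hη hxy hy) hxy hxz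
    · obtain rfl := hM.eq_of_le_of_not_P hη hxz hz
      exact absurd (hM.P_of_le hη hxy hy) hz
  · rw [hM.meet_id η hη y z hy]
    exact hxy

-- Outside `P_η` the meet is unconstrained; a common lower bound rules that case out.
theorem meet_le_left_of_le (hM : IsModelN n M) (hη : η.length ≤ n) (hxy : M.le η x y)
    (hxz : M.le η x z) : M.le η (M.meet η y z) y := by
  by_cases hy : M.P η y
  · by_cases hz : M.P η z
    · exact hM.meet_le_left η hη y z hy hz
    · obtain rfl := hM.eq_of_le_of_not_P hη hxz hz
      obtain rfl := hM.eq_of_le_of_not_P hη hxy (fun hy' => hz (hM.P_of_le hη hxy hy'))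
      exact absurd hy hz
  · rw [hM.meet_id η hη y z hy]
    exact M.le_refl η y

theorem meet_le_right_of_le (hM : IsModelN n M) (hη : η.length ≤ n) (hxy : M.le η x y)
    (hxz : M.le η x z) : M.le η (M.meet η y z) z := by
  by_cases hy : M.P η y
  · by_cases hz : M.P η z
    · exact hM.meet_le_right η hη y z hy hz
    · obtain rfl := hM.eq_of_le_of_not_P hη hxz hz
      exact absurd (hM.P_of_le hη hxy hy) hz
  · obtain rfl := hM.eq_of_le_of_not_P hη hxy hy
    rw [hM.meet_id η hη x z hy]
    exact hxz

end IsModelN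

namespace IsEmbN

variable {M N : TreeModelN n} {f : M.carrier → N.carrier} {η : List Bool}

theorem injective (hf : IsEmbN n M N f) : Function.Injective f := hf.1

theorem P_iff (hf : IsEmbN n M N f) (hη : η.length ≤ n) (x : M.carrier) :
    N.P η (f x) ↔ M.P η x :=
  hf.2.1 η hη x

theorem lt_iff (hf : IsEmbN n M N f) (hη : η.length ≤ n) (x y : M.carrier) :
    N.lt η (f x) (f y) ↔ M.lt η x y :=
  hf.2.2.1 η hη x y

theorem map_meet (hf : IsEmbN n M N f) (hη : η.length ≤ n) (x y : M.carrier) :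
    f (M.meet η x y) = N.meet η (f x) (f y) :=
  hf.2.2.2.1 η hη x y

theorem map_G (hf : IsEmbN n M N f) (hη : η.length < n) (i : Bool) (x : M.carrier) :
    f (M.G η i x) = N.G η i (f x) :=
  hf.2.2.2.2 η hη i x

theorem le_iff (hf : IsEmbN n M N f) (hη : η.length ≤ n) {x y : M.carrier} :
    N.le η (f x) (f y) ↔ M.le η x y := by
  simp only [TreeModelN.le, hf.lt_iff hη, hf.injective.eq_iff]

theorem of_empty (f : (TreeModelN.empty n).carrier → N.carrier) :
    IsEmbN n (TreeModelN.empty n) N f :=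
  ⟨fun x => x.elim, fun _ _ x => x.elim, fun _ _ x => x.elim, fun _ _ x => x.elim,
    fun _ _ _ x => x.elim⟩

end IsEmbN

section LowerChain

variable {α : Type*} (R : α → α → Prop)

structure IsLowerChain (s : Set α) : Prop where
  isChain : IsChain R s
  mem_of_rel : ∀ ⦃x y⦄, R x y → y ∈ s → x ∈ s

variable {R}

theorem isLowerChain_empty : IsLowerChain R ∅ :=
  ⟨Set.pairwise_empty _, fun _ _ _ h => h⟩

theorem IsLowerChain.inter {s t : Set α} (hs : IsLowerChain R s) (ht : IsLowerChain R t) :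
    IsLowerChain R (s ∩ t) :=
  ⟨hs.isChain.mono Set.inter_subset_left,
    fun _ _ h hy => ⟨hs.mem_of_rel h hy.1, ht.mem_of_rel h hy.2⟩⟩

theorem isLowerChain_setOf_rel (trans : ∀ {x y z}, R x y → R y z → R x z)
    (total : ∀ {x y z}, R x z → R y z → R x y ∨ R y x) (z : α) :
    IsLowerChain R {x | R x z} :=
  ⟨fun _ hx _ hy _ => total hx hy, fun _ _ h hy => trans h hy⟩

theorem IsChain.subset_total_of_isLowerChain {s t u : Set α} (hs : IsChain R s) (hts : t ⊆ s)
    (hus : u ⊆ s) (ht : IsLowerChain R t) (hu : IsLowerChain R u) : t ⊆ u ∨ u ⊆ t := by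
  by_contra! h
  obtain ⟨⟨x, hxt, hxu⟩, ⟨y, hyu, hyt⟩⟩ := And.imp Set.not_subset.1 Set.not_subset.1 h
  rcases hs (hts hxt) (hus hyu) (by rintro rfl; exact hxu hyu) with hxy | hyx
  · exact hxu (hu.mem_of_rel hxy hyu)
  · exact hyt (ht.mem_of_rel hyx hxt)

end LowerChain

structure ModelSpan (n : ℕ) where
  A : TreeModelN n
  B : TreeModelN n
  C : TreeModelN n
  f : A.carrier → B.carrier
  g : A.carrier → C.carrier
  hA : IsModelN n A
  hB : IsModelN n B
  hC : IsModelN n C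
  hf : IsEmbN n A B f
  hg : IsEmbN n A C g

namespace ModelSpan

variable (S : ModelSpan n)

abbrev swap : ModelSpan n := ⟨S.A, S.C, S.B, S.g, S.f, S.hA, S.hC, S.hB, S.hg, S.hf⟩

structure SameGap (η : List Bool) (b : S.B.carrier) (c : S.C.carrier) : Prop where
  below : ∀ a, S.B.le η (S.f a) b ↔ S.C.le η (S.g a) c
  above : ∀ a, S.B.le η b (S.f a) ↔ S.C.le η c (S.g a)
  bounded : ∃ a, S.B.le η b (S.f a)

/-- Inside a gap of `A` that is bounded above, the points of `C` are put below those of `B`. -/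
def AmalgLE (η : List Bool) : S.B.carrier ⊕ S.C.carrier → S.B.carrier ⊕ S.C.carrier → Prop
  | .inl b, .inl b' => S.B.le η b b'
  | .inr c, .inr c' => S.C.le η c c'
  | .inl b, .inr c => ∃ a, S.B.le η b (S.f a) ∧ S.C.le η (S.g a) c
  | .inr c, .inl b => (∃ a, S.C.le η c (S.g a) ∧ S.B.le η (S.f a) b) ∨
      ∃ b₀, S.B.le η b₀ b ∧ S.SameGap η b₀ c

variable {S} {η : List Bool} {a₀ : S.A.carrier} {b b' : S.B.carrier} {c c' : S.C.carrier}

theorem f_le_f_iff (hη : η.length ≤ n) {a a' : S.A.carrier} :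
    S.B.le η (S.f a) (S.f a') ↔ S.C.le η (S.g a) (S.g a') :=
  (S.hf.le_iff hη).trans (S.hg.le_iff hη).symm

theorem le_f_meet (hη : η.length ≤ n) {a a' : S.A.carrier} (ha : S.B.le η b (S.f a))
    (ha' : S.B.le η b (S.f a')) :
    S.B.le η b (S.f (S.A.meet η a a')) ∧ S.C.le η (S.g (S.A.meet η a a')) (S.g a) ∧
      S.C.le η (S.g (S.A.meet η a a')) (S.g a') := by
  rw [← f_le_f_iff hη, ← f_le_f_iff hη, S.hf.map_meet hη]
  exact ⟨S.hB.le_meet hη ha ha', S.hB.meet_le_left_of_le hη ha ha',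
    S.hB.meet_le_right_of_le hη ha ha'⟩

theorem gap_of_not_through (hη : η.length ≤ n) (hb : S.B.le η b (S.f a₀))
    (hc : S.C.le η c (S.g a₀)) (h : ∀ a, S.B.le η b (S.f a) → ¬ S.C.le η (S.g a) c) :
    (∀ a, S.C.le η (S.g a) c → S.B.le η (S.f a) b) ∧
      ∀ a, S.B.le η b (S.f a) → S.C.le η c (S.g a) := by
  refine ⟨fun a hac => ?_, fun a hba => ?_⟩
  · have hfa : S.B.le η (S.f a) (S.f a₀) := (f_le_f_iff hη).2 (S.hC.le_trans hη hac hc)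
    exact (S.hB.le_total_of_le hη hfa hb).resolve_right fun hba => h a hba hac
  · obtain ⟨hbm, hma₀, hma⟩ := le_f_meet hη hb hba
    rcases S.hC.le_total_of_le hη hma₀ hc with hmc | hcm
    · exact absurd hmc (h _ hbm)
    · exact S.hC.le_trans hη hcm hma

theorem sameGap_of_not_through (hη : η.length ≤ n) (hb : S.B.le η b (S.f a₀))
    (hc : S.C.le η c (S.g a₀)) (hbc : ∀ a, S.B.le η b (S.f a) → ¬ S.C.le η (S.g a) c)
    (hcb : ∀ a, S.C.le η c (S.g a) → ¬ S.B.le η (S.f a) b) : S.SameGap η b c := by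
  obtain ⟨below₁, above₁⟩ := gap_of_not_through hη hb hc hbc
  obtain ⟨below₂, above₂⟩ := gap_of_not_through (S := S.swap) hη hc hb hcb
  exact ⟨fun a => ⟨below₂ a, below₁ a⟩, fun a => ⟨above₁ a, above₂ a⟩, a₀, hb⟩

theorem SameGap.of_le (hη : η.length ≤ n) (hgap : S.SameGap η b c') (hcc' : S.C.le η c c')
    (hcb : ∀ a, S.C.le η c (S.g a) → ¬ S.B.le η (S.f a) b) : S.SameGap η b c := by
  obtain ⟨a₀, hba₀⟩ := hgap.bounded
  refine sameGap_of_not_through hη hba₀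
    (S.hC.le_trans hη hcc' ((hgap.above a₀).1 hba₀)) (fun a hba hac => ?_) hcb
  have hc'a : S.C.le η c' (S.g a) := (hgap.above a).1 hba
  exact hcb a (S.hC.le_trans hη hcc' hc'a)
    ((hgap.below a).2 (S.hC.le_trans hη hac hcc'))

theorem AmalgLE.refl (z : S.B.carrier ⊕ S.C.carrier) : S.AmalgLE η z z := by
  rcases z with b | c
  exacts [S.B.le_refl η b, S.C.le_refl η c]

theorem AmalgLE.trans (hη : η.length ≤ n) {x y z : S.B.carrier ⊕ S.C.carrier}
    (hxy : S.AmalgLE η x y) (hyz : S.AmalgLE η y z) : S.AmalgLE η x z := by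
  rcases x with b | c <;> rcases y with b' | c' <;> rcases z with b'' | c''
  · exact S.hB.le_trans hη hxy hyz
  · obtain ⟨a, hb'a, hac''⟩ := hyz
    exact ⟨a, S.hB.le_trans hη hxy hb'a, hac''⟩
  · obtain ⟨a, hba, hac'⟩ := hxy
    rcases hyz with ⟨a', hc'a', ha'b''⟩ | ⟨b₀, hb₀b'', hgap⟩
    · have haa' : S.B.le η (S.f a) (S.f a') := (f_le_f_iff hη).2 (S.hC.le_trans hη hac' hc'a')
      exact S.hB.le_trans hη hba (S.hB.le_trans hη haa' ha'b'')
    · exact S.hB.le_trans hη hba (S.hB.le_trans hη ((hgap.below a).2 hac') hb₀b'')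
  · obtain ⟨a, hba, hac'⟩ := hxy
    exact ⟨a, hba, S.hC.le_trans hη hac' hyz⟩
  · rcases hxy with ⟨a, hca, hab'⟩ | ⟨b₀, hb₀b', hgap⟩
    · exact .inl ⟨a, hca, S.hB.le_trans hη hab' hyz⟩
    · exact .inr ⟨b₀, S.hB.le_trans hη hb₀b' hyz, hgap⟩
  · obtain ⟨a', hb'a', ha'c''⟩ := hyz
    rcases hxy with ⟨a, hca, hab'⟩ | ⟨b₀, hb₀b', hgap⟩
    · have haa' : S.C.le η (S.g a) (S.g a') := (f_le_f_iff hη).1 (S.hB.le_trans hη hab' hb'a')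
      exact S.hC.le_trans hη hca (S.hC.le_trans hη haa' ha'c'')
    · exact S.hC.le_trans hη ((hgap.above a').1 (S.hB.le_trans hη hb₀b' hb'a')) ha'c''
  · rcases hyz with ⟨a, hc'a, hab''⟩ | ⟨b₀, hb₀b'', hgap⟩
    · exact .inl ⟨a, S.hC.le_trans hη hxy hc'a, hab''⟩
    · by_cases hthrough : ∃ a, S.C.le η c (S.g a) ∧ S.B.le η (S.f a) b''
      · exact .inl hthrough
      · refine .inr ⟨b₀, hb₀b'', hgap.of_le hη hxy fun a hca hab₀ => ?_⟩
        exact hthrough ⟨a, hca, S.hB.le_trans hη hab₀ hb₀b''⟩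
  · exact S.hC.le_trans hη hxy hyz

theorem total_of_le_f_of_le_g (hη : η.length ≤ n) (hb : S.B.le η b (S.f a₀))
    (hc : S.C.le η c (S.g a₀)) :
    S.AmalgLE η (.inl b) (.inr c) ∨ S.AmalgLE η (.inr c) (.inl b) := by
  by_cases hbc : S.AmalgLE η (.inl b) (.inr c)
  · exact .inl hbc
  by_cases hcb : ∃ a, S.C.le η c (S.g a) ∧ S.B.le η (S.f a) b
  · exact .inr (.inl hcb)
  refine .inr (.inr ⟨b, S.B.le_refl η b, sameGap_of_not_through hη hb hc ?_ ?_⟩)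
  · exact fun a hba hac => hbc ⟨a, hba, hac⟩
  · exact fun a hca hab => hcb ⟨a, hca, hab⟩

theorem exists_anchor_of_inr_le_inl (hη : η.length ≤ n) (h : S.AmalgLE η (.inr c) (.inl b)) :
    ∃ p, S.AmalgLE η (.inr c) (.inl p) ∧ S.B.le η p b ∧ (∃ a, S.B.le η p (S.f a)) ∧
      ∀ a, S.B.le η p (S.f a) → S.C.le η c (S.g a) := by
  rcases h with ⟨a, hca, hab⟩ | ⟨b₀, hb₀b, hgap⟩
  · refine ⟨S.f a, .inl ⟨a, hca, S.B.le_refl η _⟩, hab, ⟨a, S.B.le_refl η _⟩, fun a' haa' => ?_⟩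
    exact S.hC.le_trans hη hca ((f_le_f_iff hη).1 haa')
  · exact ⟨b₀, .inr ⟨b₀, S.B.le_refl η b₀, hgap⟩, hb₀b, hgap.bounded, fun a => (hgap.above a).1⟩

theorem total_inl_inr_of_le (hη : η.length ≤ n) {z : S.B.carrier ⊕ S.C.carrier}
    (hb : S.AmalgLE η (.inl b) z) (hc : S.AmalgLE η (.inr c) z) :
    S.AmalgLE η (.inl b) (.inr c) ∨ S.AmalgLE η (.inr c) (.inl b) := by
  rcases z with b₀ | c₀
  · obtain ⟨p, hcp, hpb₀, ⟨a, hpa⟩, hp⟩ := exists_anchor_of_inr_le_inl hη hc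
    rcases S.hB.le_total_of_le hη hb hpb₀ with hbp | hpb
    · exact total_of_le_f_of_le_g hη (S.hB.le_trans hη hbp hpa) (hp a hpa)
    · exact .inr (hcp.trans hη hpb)
  · obtain ⟨a, hba, hac₀⟩ := hb
    rcases S.hC.le_total_of_le hη hc hac₀ with hca | hac
    · exact total_of_le_f_of_le_g hη hba hca
    · exact .inl ⟨a, hba, hac⟩

theorem AmalgLE.total_of_le (hη : η.length ≤ n) {x y z : S.B.carrier ⊕ S.C.carrier}
    (hxz : S.AmalgLE η x z) (hyz : S.AmalgLE η y z) : S.AmalgLE η x y ∨ S.AmalgLE η y x := by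
  rcases x with b | c <;> rcases y with b' | c'
  · rcases z with b₀ | c₀
    · exact S.hB.le_total_of_le hη hxz hyz
    · obtain ⟨a, hba, hac₀⟩ := hxz
      obtain ⟨a', hb'a', ha'c₀⟩ := hyz
      rcases S.hC.le_total_of_le hη hac₀ ha'c₀ with haa' | ha'a
      · exact S.hB.le_total_of_le hη (S.hB.le_trans hη hba ((f_le_f_iff hη).2 haa')) hb'a'
      · exact S.hB.le_total_of_le hη hba (S.hB.le_trans hη hb'a' ((f_le_f_iff hη).2 ha'a))
  · exact total_inl_inr_of_le hη hxz hyz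
  · exact (total_inl_inr_of_le hη hyz hxz).symm
  · rcases z with b₀ | c₀
    · obtain ⟨p, -, hpb₀, ⟨a, hpa⟩, hp⟩ := exists_anchor_of_inr_le_inl hη hxz
      obtain ⟨p', -, hp'b₀, ⟨a', hp'a'⟩, hp'⟩ := exists_anchor_of_inr_le_inl hη hyz
      rcases S.hB.le_total_of_le hη hpb₀ hp'b₀ with hpp' | hp'p
      · exact S.hC.le_total_of_le hη (hp a' (S.hB.le_trans hη hpp' hp'a')) (hp' a' hp'a')
      · exact S.hC.le_total_of_le hη (hp a hpa) (hp' a (S.hB.le_trans hη hp'p hpa))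
    · exact S.hC.le_total_of_le hη hxz hyz

theorem SameGap.exists_le_of_inr_le_inl (hη : η.length ≤ n) {b₀ : S.B.carrier}
    (hgap : S.SameGap η b₀ c) (h : S.AmalgLE η (.inr c) (.inl b)) :
    ∃ b₁, S.SameGap η b₁ c ∧ S.B.le η b₁ b₀ ∧ S.B.le η b₁ b := by
  rcases h with ⟨a, hca, hab⟩ | ⟨b₀', hb₀'b, hgap'⟩
  · exact ⟨b₀, hgap, S.B.le_refl η b₀, S.hB.le_trans hη ((hgap.above a).2 hca) hab⟩
  · obtain ⟨a, hb₀a⟩ := hgap.bounded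
    have hb₀'a : S.B.le η b₀' (S.f a) := (hgap'.above a).2 ((hgap.above a).1 hb₀a)
    rcases S.hB.le_total_of_le hη hb₀a hb₀'a with h₀ | h₀
    · exact ⟨b₀, hgap, S.B.le_refl η b₀, S.hB.le_trans hη h₀ hb₀'b⟩
    · exact ⟨b₀', hgap', h₀, hb₀'b⟩

theorem amalgLE_inl_meet_iff (hη : η.length ≤ n) (hb : S.B.P η b) (hb' : S.B.P η b')
    {x : S.B.carrier ⊕ S.C.carrier} :
    S.AmalgLE η x (.inl (S.B.meet η b b')) ↔ S.AmalgLE η x (.inl b) ∧ S.AmalgLE η x (.inl b') := by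
  refine ⟨fun h => ⟨h.trans hη (S.hB.meet_le_left η hη b b' hb hb'),
    h.trans hη (S.hB.meet_le_right η hη b b' hb hb')⟩, fun ⟨h, h'⟩ => ?_⟩
  rcases x with b₂ | c
  · exact S.hB.le_meet hη h h'
  rcases h with ⟨a, hca, hab⟩ | ⟨b₀, hb₀b, hgap⟩
  · rcases h' with ⟨a', hca', ha'b'⟩ | ⟨b₀', hb₀'b', hgap'⟩
    · obtain ⟨hcm, hma, hma'⟩ := le_f_meet (S := S.swap) hη hca hca'
      exact .inl ⟨_, hcm, S.hB.le_meet hη (S.hB.le_trans hη hma hab)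
        (S.hB.le_trans hη hma' ha'b')⟩
    · obtain ⟨b₁, hgap₁, hb₁b₀', hb₁b⟩ := hgap'.exists_le_of_inr_le_inl hη (.inl ⟨a, hca, hab⟩)
      exact .inr ⟨b₁, S.hB.le_meet hη hb₁b (S.hB.le_trans hη hb₁b₀' hb₀'b'), hgap₁⟩
  · obtain ⟨b₁, hgap₁, hb₁b₀, hb₁b'⟩ := hgap.exists_le_of_inr_le_inl hη h'
    exact .inr ⟨b₁, S.hB.le_meet hη (S.hB.le_trans hη hb₁b₀ hb₀b) hb₁b', hgap₁⟩

theorem amalgLE_inr_meet_iff (hη : η.length ≤ n) (hc : S.C.P η c) (hc' : S.C.P η c')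
    {x : S.B.carrier ⊕ S.C.carrier} :
    S.AmalgLE η x (.inr (S.C.meet η c c')) ↔ S.AmalgLE η x (.inr c) ∧ S.AmalgLE η x (.inr c') := by
  refine ⟨fun h => ⟨h.trans hη (S.hC.meet_le_left η hη c c' hc hc'),
    h.trans hη (S.hC.meet_le_right η hη c c' hc hc')⟩, fun ⟨h, h'⟩ => ?_⟩
  rcases x with b | c₂
  · obtain ⟨a, hba, hac⟩ := h
    obtain ⟨a', hba', ha'c'⟩ := h'
    obtain ⟨hbm, hma, hma'⟩ := le_f_meet hη hba hba'
    exact ⟨_, hbm, S.hC.le_meet hη (S.hC.le_trans hη hma hac) (S.hC.le_trans hη hma' ha'c')⟩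
  · exact S.hC.le_meet hη h h'

theorem eq_f_g_of_inl_le_of_le_inl (hη : η.length ≤ n) (h₁ : S.AmalgLE η (.inl b) (.inr c))
    (h₂ : S.AmalgLE η (.inr c) (.inl b)) : ∃ a, S.f a = b ∧ S.g a = c := by
  obtain ⟨a, hba, hac⟩ := h₁
  obtain ⟨p, hcp, hpb, -, hp⟩ := exists_anchor_of_inr_le_inl hη h₂
  have hab : S.B.le η (S.f a) b :=
    S.hB.le_trans hη
      (AmalgLE.trans (x := .inl (S.f a)) (y := .inr c) hη ⟨a, S.B.le_refl η _, hac⟩ hcp) hpb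
  have hpa : S.B.le η p (S.f a) := S.hB.le_trans hη hpb hba
  exact ⟨a, S.hB.le_antisymm hη hab hba, S.hC.le_antisymm hη hac (hp a hpa)⟩

variable (S)

def P (η : List Bool) : S.B.carrier ⊕ S.C.carrier → Prop :=
  Sum.elim (S.B.P η) (S.C.P η)

def meet (η : List Bool) : S.B.carrier ⊕ S.C.carrier → S.B.carrier ⊕ S.C.carrier →
    S.B.carrier ⊕ S.C.carrier
  | .inl b, .inl b' => .inl (S.B.meet η b b')
  | .inr c, .inr c' => .inr (S.C.meet η c c')
  | z, _ => z

def G (η : List Bool) (i : Bool) : S.B.carrier ⊕ S.C.carrier → S.B.carrier ⊕ S.C.carrier :=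
  Sum.map (S.B.G η i) (S.C.G η i)

def Glued : S.B.carrier ⊕ S.C.carrier → S.B.carrier ⊕ S.C.carrier → Prop
  | .inl b, .inl b' => b = b'
  | .inr c, .inr c' => c = c'
  | .inl b, .inr c => ∃ a, S.f a = b ∧ S.g a = c
  | .inr c, .inl b => ∃ a, S.f a = b ∧ S.g a = c

variable {S} {z w z' w' : S.B.carrier ⊕ S.C.carrier}

theorem P_disjoint {ν : List Bool} (hη : η.length ≤ n)
    (hν : ν.length ≤ n) (hz : S.P η z) (hzν : S.P ν z) : η = ν := by
  by_contra hne
  rcases z with b | c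
  exacts [S.hB.disj η ν hη hν hne b hz hzν, S.hC.disj η ν hη hν hne c hz hzν]

theorem meet_of_not_P (hη : η.length ≤ n) (hz : ¬ S.P η z) (w : S.B.carrier ⊕ S.C.carrier) :
    S.meet η z w = z := by
  rcases z with b | c <;> rcases w with b' | c'
  · exact congrArg Sum.inl (S.hB.meet_id η hη b b' hz)
  · rfl
  · rfl
  · exact congrArg Sum.inr (S.hC.meet_id η hη c c' hz)

theorem P_G (hη : η.length < n) (i : Bool) (hz : S.P η z) :
    S.P (η ++ [i]) (S.G η i z) := by
  rcases z with b | c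
  exacts [S.hB.G_mem η hη i b hz, S.hC.G_mem η hη i c hz]

theorem G_of_not_P (hη : η.length < n) (i : Bool) (hz : ¬ S.P η z) : S.G η i z = z := by
  rcases z with b | c
  exacts [congrArg Sum.inl (S.hB.G_id η hη i b hz), congrArg Sum.inr (S.hC.G_id η hη i c hz)]

theorem Glued.refl (z : S.B.carrier ⊕ S.C.carrier) : S.Glued z z := by
  rcases z with b | c <;> rfl

theorem glued_of_amalgLE (hη : η.length ≤ n) (hzw : S.AmalgLE η z w) (hwz : S.AmalgLE η w z) :
    S.Glued z w := by
  rcases z with b | c <;> rcases w with b' | c'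
  · exact S.hB.le_antisymm hη hzw hwz
  · exact eq_f_g_of_inl_le_of_le_inl hη hzw hwz
  · exact eq_f_g_of_inl_le_of_le_inl hη hwz hzw
  · exact S.hC.le_antisymm hη hzw hwz

theorem Glued.amalgLE (h : S.Glued z w) : S.AmalgLE η z w ∧ S.AmalgLE η w z := by
  rcases z with b | c <;> rcases w with b' | c'
  · obtain rfl : b = b' := h
    exact ⟨AmalgLE.refl _, AmalgLE.refl _⟩
  · obtain ⟨a, rfl, rfl⟩ := h
    exact ⟨⟨a, S.B.le_refl η _, S.C.le_refl η _⟩, .inl ⟨a, S.C.le_refl η _, S.B.le_refl η _⟩⟩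
  · obtain ⟨a, rfl, rfl⟩ := h
    exact ⟨.inl ⟨a, S.C.le_refl η _, S.B.le_refl η _⟩, ⟨a, S.B.le_refl η _, S.C.le_refl η _⟩⟩
  · obtain rfl : c = c' := h
    exact ⟨AmalgLE.refl _, AmalgLE.refl _⟩

theorem Glued.P_iff (h : S.Glued z w) (hη : η.length ≤ n) : S.P η z ↔ S.P η w := by
  rcases z with b | c <;> rcases w with b' | c'
  · obtain rfl : b = b' := h
    rfl
  · obtain ⟨a, rfl, rfl⟩ := h
    exact (S.hf.P_iff hη a).trans (S.hg.P_iff hη a).symm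
  · obtain ⟨a, rfl, rfl⟩ := h
    exact (S.hg.P_iff hη a).trans (S.hf.P_iff hη a).symm
  · obtain rfl : c = c' := h
    rfl

theorem Glued.meet (hη : η.length ≤ n) (hz : S.Glued z z') (hw : S.Glued w w')
    (hzw : z.isLeft = w.isLeft) (hzw' : z'.isLeft = w'.isLeft) :
    S.Glued (S.meet η z w) (S.meet η z' w') := by
  rcases z with b | c <;> rcases w with b' | c' <;> cases hzw <;>
    rcases z' with b₂ | c₂ <;> rcases w' with b₂' | c₂' <;> cases hzw'
  · obtain rfl : b = b₂ := hz
    obtain rfl : b' = b₂' := hw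
    exact Glued.refl _
  · obtain ⟨a, rfl, rfl⟩ := hz
    obtain ⟨a', rfl, rfl⟩ := hw
    exact ⟨S.A.meet η a a', S.hf.map_meet hη a a', S.hg.map_meet hη a a'⟩
  · obtain ⟨a, rfl, rfl⟩ := hz
    obtain ⟨a', rfl, rfl⟩ := hw
    exact ⟨S.A.meet η a a', S.hf.map_meet hη a a', S.hg.map_meet hη a a'⟩
  · obtain rfl : c = c₂ := hz
    obtain rfl : c' = c₂' := hw
    exact Glued.refl _

theorem Glued.G (hη : η.length < n) (i : Bool) (h : S.Glued z w) :
    S.Glued (S.G η i z) (S.G η i w) := by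
  rcases z with b | c <;> rcases w with b' | c'
  · exact congrArg (S.B.G η i) (h : b = b')
  · obtain ⟨a, rfl, rfl⟩ := h
    exact ⟨S.A.G η i a, S.hf.map_G hη i a, S.hg.map_G hη i a⟩
  · obtain ⟨a, rfl, rfl⟩ := h
    exact ⟨S.A.G η i a, S.hf.map_G hη i a, S.hg.map_G hη i a⟩
  · exact congrArg (S.C.G η i) (h : c = c')

variable (S)

abbrev AmalgCarrier : Type := Option (List Bool) × Set (S.B.carrier ⊕ S.C.carrier)

open Classical in
noncomputable def sortOf (z : S.B.carrier ⊕ S.C.carrier) : Option (List Bool) :=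
  if h : ∃ η, η.length ≤ n ∧ S.P η z then some h.choose else none

/-- A point of no sort gets the dummy index `[]`, under which its set is its `Glued`-class. -/
noncomputable def toAmalgam (z : S.B.carrier ⊕ S.C.carrier) : S.AmalgCarrier :=
  (S.sortOf z, {w | S.AmalgLE ((S.sortOf z).getD []) w z})

def AmalgP (η : List Bool) (x : S.AmalgCarrier) : Prop :=
  x.1 = some η ∧ IsLowerChain (S.AmalgLE η) x.2

def amalgLt (η : List Bool) (x y : S.AmalgCarrier) : Prop :=
  S.AmalgP η x ∧ S.AmalgP η y ∧ x.2 ⊂ y.2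

open Classical in
/-- Off `P_η × P_η` the meet of a model is arbitrary, so there it is copied from `B` or `C`. -/
noncomputable def amalgMeet (η : List Bool) (x y : S.AmalgCarrier) : S.AmalgCarrier :=
  if S.AmalgP η x ∧ S.AmalgP η y then (some η, x.2 ∩ y.2)
  else if h : ∃ p : (S.B.carrier ⊕ S.C.carrier) × (S.B.carrier ⊕ S.C.carrier),
      p.1.isLeft = p.2.isLeft ∧ S.toAmalgam p.1 = x ∧ S.toAmalgam p.2 = y then
    S.toAmalgam (S.meet η h.choose.1 h.choose.2)
  else x

open Classical in
noncomputable def amalgG (η : List Bool) (i : Bool) (x : S.AmalgCarrier) : S.AmalgCarrier :=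
  if h : ∃ z, S.toAmalgam z = x then S.toAmalgam (S.G η i h.choose)
  else if S.AmalgP η x then (some (η ++ [i]), ∅)
  else x

noncomputable abbrev amalgam : TreeModelN n where
  carrier := S.AmalgCarrier
  P := S.AmalgP
  lt := S.amalgLt
  meet := S.amalgMeet
  G := S.amalgG

variable {S} {x y : S.AmalgCarrier}

theorem sortOf_eq_some (hη : η.length ≤ n) (hz : S.P η z) : S.sortOf z = some η := by
  have h : ∃ ν, ν.length ≤ n ∧ S.P ν z := ⟨η, hη, hz⟩
  rw [sortOf, dif_pos h]
  exact congrArg some (P_disjoint h.choose_spec.1 hη h.choose_spec.2 hz)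

theorem P_of_sortOf_eq_some (h : S.sortOf z = some η) : η.length ≤ n ∧ S.P η z := by
  rw [sortOf] at h
  split_ifs at h with hex
  obtain rfl := Option.some.inj h
  exact hex.choose_spec

theorem length_sortOf_getD_le (z : S.B.carrier ⊕ S.C.carrier) :
    ((S.sortOf z).getD []).length ≤ n := by
  cases h : S.sortOf z with
  | none => exact Nat.zero_le n
  | some η => exact (P_of_sortOf_eq_some h).1

theorem Glued.sortOf_eq (h : S.Glued z w) : S.sortOf z = S.sortOf w := by
  have hP : (fun η => η.length ≤ n ∧ S.P η z) = (fun η => η.length ≤ n ∧ S.P η w) :=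
    funext fun η => propext (and_congr_right fun hη => h.P_iff hη)
  rw [sortOf, sortOf, hP]

theorem toAmalgam_eq_iff : S.toAmalgam z = S.toAmalgam w ↔ S.Glued z w := by
  refine ⟨fun h => ?_, fun h => ?_⟩
  · obtain ⟨hsort, hset⟩ := Prod.mk.inj h
    rw [hsort] at hset
    have hη := length_sortOf_getD_le w
    exact glued_of_amalgLE hη (Set.ext_iff.1 hset z |>.1 (AmalgLE.refl z))
      (Set.ext_iff.1 hset w |>.2 (AmalgLE.refl w))
  · have hsort := h.sortOf_eq
    refine Prod.ext hsort ?_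
    simp only [toAmalgam, hsort]
    ext x
    exact ⟨fun hx => hx.trans (length_sortOf_getD_le w) h.amalgLE.1,
      fun hx => hx.trans (length_sortOf_getD_le w) h.amalgLE.2⟩

theorem P_meet (hη : η.length ≤ n) (hzw : z.isLeft = w.isLeft) (hz : S.P η z) (hw : S.P η w) :
    S.P η (S.meet η z w) := by
  rcases z with b | c <;> rcases w with b' | c' <;> cases hzw
  exacts [S.hB.meet_mem η hη b b' hz hw, S.hC.meet_mem η hη c c' hz hw]

theorem amalgLE_meet_iff (hη : η.length ≤ n) (hzw : z.isLeft = w.isLeft) (hz : S.P η z)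
    (hw : S.P η w) {x : S.B.carrier ⊕ S.C.carrier} :
    S.AmalgLE η x (S.meet η z w) ↔ S.AmalgLE η x z ∧ S.AmalgLE η x w := by
  rcases z with b | c <;> rcases w with b' | c' <;> cases hzw
  exacts [amalgLE_inl_meet_iff hη hz hw, amalgLE_inr_meet_iff hη hz hw]

theorem toAmalgam_of_P (hη : η.length ≤ n) (hz : S.P η z) :
    S.toAmalgam z = (some η, {x | S.AmalgLE η x z}) := by
  rw [toAmalgam, sortOf_eq_some hη hz]
  rfl

theorem amalgP_toAmalgam_iff (hη : η.length ≤ n) : S.AmalgP η (S.toAmalgam z) ↔ S.P η z := by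
  refine ⟨fun h => (P_of_sortOf_eq_some h.1).2, fun hz => ?_⟩
  rw [toAmalgam_of_P hη hz]
  exact ⟨rfl, isLowerChain_setOf_rel (R := S.AmalgLE η) (AmalgLE.trans hη)
    (AmalgLE.total_of_le hη) z⟩

theorem setOf_amalgLE_subset_iff (hη : η.length ≤ n) :
    {x | S.AmalgLE η x z} ⊆ {x | S.AmalgLE η x w} ↔ S.AmalgLE η z w :=
  ⟨fun h => h (AmalgLE.refl z), fun h _ hx => AmalgLE.trans hη hx h⟩

theorem amalgLt_toAmalgam_iff (hη : η.length ≤ n) :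
    S.amalgLt η (S.toAmalgam z) (S.toAmalgam w) ↔
      S.P η z ∧ S.P η w ∧ S.AmalgLE η z w ∧ ¬ S.AmalgLE η w z := by
  simp only [amalgLt, amalgP_toAmalgam_iff hη]
  refine and_congr_right fun hz => and_congr_right fun hw => ?_
  rw [toAmalgam_of_P hη hz, toAmalgam_of_P hη hw, ssubset_iff_subset_not_superset,
    setOf_amalgLE_subset_iff hη, setOf_amalgLE_subset_iff hη]

theorem amalgMeet_of_amalgP (hx : S.AmalgP η x) (hy : S.AmalgP η y) :
    S.amalgMeet η x y = (some η, x.2 ∩ y.2) :=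
  if_pos ⟨hx, hy⟩

theorem amalgMeet_of_not_amalgP (hη : η.length ≤ n) (hx : ¬ S.AmalgP η x) :
    S.amalgMeet η x y = x := by
  rw [amalgMeet, if_neg fun h => hx h.1]
  split_ifs with h
  · obtain ⟨-, hz, -⟩ := h.choose_spec
    rw [meet_of_not_P hη fun hP => hx (hz ▸ (amalgP_toAmalgam_iff hη).2 hP), hz]
  · rfl

theorem amalgMeet_toAmalgam (hη : η.length ≤ n) (hzw : z.isLeft = w.isLeft) :
    S.amalgMeet η (S.toAmalgam z) (S.toAmalgam w) = S.toAmalgam (S.meet η z w) := by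
  by_cases hP : S.P η z ∧ S.P η w
  · rw [amalgMeet_of_amalgP ((amalgP_toAmalgam_iff hη).2 hP.1) ((amalgP_toAmalgam_iff hη).2 hP.2),
      toAmalgam_of_P hη hP.1, toAmalgam_of_P hη hP.2, toAmalgam_of_P hη (P_meet hη hzw hP.1 hP.2)]
    exact Prod.ext rfl (Set.ext fun _ => (amalgLE_meet_iff hη hzw hP.1 hP.2).symm)
  · have hex : ∃ p : (S.B.carrier ⊕ S.C.carrier) × (S.B.carrier ⊕ S.C.carrier),
        p.1.isLeft = p.2.isLeft ∧ S.toAmalgam p.1 = S.toAmalgam z ∧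
          S.toAmalgam p.2 = S.toAmalgam w := ⟨(z, w), hzw, rfl, rfl⟩
    rw [amalgMeet, if_neg (by rwa [amalgP_toAmalgam_iff hη, amalgP_toAmalgam_iff hη]), dif_pos hex]
    obtain ⟨hside, hz, hw⟩ := hex.choose_spec
    exact toAmalgam_eq_iff.2
      (Glued.meet hη (toAmalgam_eq_iff.1 hz) (toAmalgam_eq_iff.1 hw) hside hzw)

theorem amalgG_toAmalgam (hη : η.length < n) (i : Bool) :
    S.amalgG η i (S.toAmalgam z) = S.toAmalgam (S.G η i z) := by
  have hex : ∃ w, S.toAmalgam w = S.toAmalgam z := ⟨z, rfl⟩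
  rw [amalgG, dif_pos hex]
  exact toAmalgam_eq_iff.2 ((toAmalgam_eq_iff.1 hex.choose_spec).G hη i)

theorem amalgam_le_iff (hx : S.AmalgP η x) (hy : S.AmalgP η y) :
    S.amalgam.le η x y ↔ x.2 ⊆ y.2 := by
  refine ⟨?_, fun h => ?_⟩
  · rintro (⟨-, -, h⟩ | rfl)
    exacts [h.subset, subset_rfl]
  · rcases h.ssubset_or_eq with h | h
    · exact .inl ⟨hx, hy, h⟩
    · exact .inr (Prod.ext (hx.1.trans hy.1.symm) h)

theorem amalgam_isModel : IsModelN n S.amalgam where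
  disj _ _ _ _ hne _ hx hν := hne (Option.some.inj (hx.1.symm.trans hν.1))
  lt_mem _ _ _ _ h := ⟨h.1, h.2.1⟩
  lt_irrefl _ _ _ h := h.2.2.ne rfl
  lt_trans _ _ _ _ _ h₁ h₂ := ⟨h₁.1, h₂.2.1, h₁.2.2.trans h₂.2.2⟩
  pred_linear _ _ x hx y z hy hz := by
    rcases hx.2.isChain.subset_total_of_isLowerChain hy.2.2.subset hz.2.2.subset hy.1.2 hz.1.2
      with h | h
    · rcases (amalgam_le_iff hy.1 hz.1).2 h with h | rfl
      exacts [.inl h, .inr (.inr rfl)]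
    · rcases (amalgam_le_iff hz.1 hy.1).2 h with h | rfl
      exacts [.inr (.inl h), .inr (.inr rfl)]
  meet_mem η _ x y hx hy := by
    show S.AmalgP η (S.amalgMeet η x y)
    rw [amalgMeet_of_amalgP hx hy]
    exact ⟨rfl, hx.2.inter hy.2⟩
  meet_le_left η _ x y hx hy := by
    show S.amalgam.le η (S.amalgMeet η x y) x
    rw [amalgMeet_of_amalgP hx hy]
    exact (amalgam_le_iff ⟨rfl, hx.2.inter hy.2⟩ hx).2 Set.inter_subset_left
  meet_le_right η _ x y hx hy := by
    show S.amalgam.le η (S.amalgMeet η x y) y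
    rw [amalgMeet_of_amalgP hx hy]
    exact (amalgam_le_iff ⟨rfl, hx.2.inter hy.2⟩ hy).2 Set.inter_subset_right
  meet_glb η _ x y z hx hy hz hzx hzy := by
    show S.amalgam.le η z (S.amalgMeet η x y)
    rw [amalgMeet_of_amalgP hx hy]
    exact (amalgam_le_iff hz ⟨rfl, hx.2.inter hy.2⟩).2
      (Set.subset_inter ((amalgam_le_iff hz hx).1 hzx) ((amalgam_le_iff hz hy).1 hzy))
  meet_id _ hη _ _ hx := amalgMeet_of_not_amalgP hη hx
  G_mem η hη i x hx := by
    show S.AmalgP (η ++ [i]) (S.amalgG η i x)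
    by_cases h : ∃ z, S.toAmalgam z = x
    · obtain ⟨z, rfl⟩ := h
      rw [amalgG_toAmalgam hη, amalgP_toAmalgam_iff (by simpa using hη)]
      exact P_G hη i ((amalgP_toAmalgam_iff hη.le).1 hx)
    · rw [amalgG, dif_neg h, if_pos hx]
      exact ⟨rfl, isLowerChain_empty⟩
  G_id η hη i x hx := by
    show S.amalgG η i x = x
    by_cases h : ∃ z, S.toAmalgam z = x
    · obtain ⟨z, rfl⟩ := h
      rw [amalgG_toAmalgam hη, G_of_not_P hη i fun hz => hx ((amalgP_toAmalgam_iff hη.le).2 hz)]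
    · rw [amalgG, dif_neg h, if_neg hx]

theorem isEmbN_toAmalgam_inl : IsEmbN n S.B S.amalgam fun b => S.toAmalgam (.inl b) :=
  ⟨fun _ _ h => toAmalgam_eq_iff.1 h, fun _ hη _ => amalgP_toAmalgam_iff hη,
    fun _ hη _ _ => (amalgLt_toAmalgam_iff hη).trans (S.hB.lt_iff_P_and_le_not_ge hη).symm,
    fun _ hη b b' => (amalgMeet_toAmalgam (z := .inl b) (w := .inl b') hη rfl).symm,
    fun _ hη i b => (amalgG_toAmalgam (z := .inl b) hη i).symm⟩

theorem isEmbN_toAmalgam_inr : IsEmbN n S.C S.amalgam fun c => S.toAmalgam (.inr c) :=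
  ⟨fun _ _ h => toAmalgam_eq_iff.1 h, fun _ hη _ => amalgP_toAmalgam_iff hη,
    fun _ hη _ _ => (amalgLt_toAmalgam_iff hη).trans (S.hC.lt_iff_P_and_le_not_ge hη).symm,
    fun _ hη c c' => (amalgMeet_toAmalgam (z := .inr c) (w := .inr c') hη rfl).symm,
    fun _ hη i c => (amalgG_toAmalgam (z := .inr c) hη i).symm⟩

variable (S)

theorem exists_amalgam : ∃ D : TreeModelN n, IsModelN n D ∧
    ∃ (f' : S.B.carrier → D.carrier) (g' : S.C.carrier → D.carrier),
      IsEmbN n S.B D f' ∧ IsEmbN n S.C D g' ∧ f' ∘ S.f = g' ∘ S.g :=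
  ⟨S.amalgam, S.amalgam_isModel, _, _, isEmbN_toAmalgam_inl, isEmbN_toAmalgam_inr,
    funext fun a => toAmalgam_eq_iff.2 ⟨a, rfl, rfl⟩⟩

end ModelSpan

/-- For every `n < ω`, the class of models of `T_n^∀` has the joint
embedding property and the amalgamation property. -/
theorem treeModelN_JEP_and_AP (n : ℕ) :
    (∀ M N : TreeModelN n, IsModelN n M → IsModelN n N →
      ∃ D : TreeModelN n, IsModelN n D ∧
        ∃ (f : M.carrier → D.carrier) (g : N.carrier → D.carrier),
          IsEmbN n M D f ∧ IsEmbN n N D g) ∧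
    (∀ A B C : TreeModelN n, IsModelN n A → IsModelN n B → IsModelN n C →
      ∀ (f : A.carrier → B.carrier) (g : A.carrier → C.carrier),
        IsEmbN n A B f → IsEmbN n A C g →
        ∃ D : TreeModelN n, IsModelN n D ∧
          ∃ (f' : B.carrier → D.carrier) (g' : C.carrier → D.carrier),
            IsEmbN n B D f' ∧ IsEmbN n C D g' ∧ f' ∘ f = g' ∘ g) := by
  refine ⟨fun M N hM hN => ?_, fun A B C hA hB hC f g hf hg =>
    ModelSpan.exists_amalgam ⟨A, B, C, f, g, hA, hB, hC, hf, hg⟩⟩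
  obtain ⟨D, hD, f, g, hf, hg, -⟩ := ModelSpan.exists_amalgam ⟨TreeModelN.empty n, M, N,
    Empty.elim, Empty.elim, TreeModelN.isModelN_empty, hM, hN, .of_empty _, .of_empty _⟩
  exact ⟨D, hD, f, g, hf, hg⟩
end

section
/- There exists a strictly decreasing bijection σ : ℚ → ℚ such that for every q ∈ ℚ, (q : ℝ) < π if and only if π < (σ(q) : ℝ). In particular, σ maps {q ∈ ℚ | π < q} onto {q ∈ ℚ | q < π} and induces an automorphism of the betweenness structure on ℚ ∪ {π} fixing π. -/
section Aux

local notation "π" => Real.pi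

abbrev PiA : Type := {q : ℚ // (q : ℝ) < π}
abbrev PiB : Type := {q : ℚ // π < (q : ℝ)}

noncomputable instance : LinearOrder PiA := Subtype.instLinearOrder _
noncomputable instance : LinearOrder PiB := Subtype.instLinearOrder _

instance : Nonempty PiA := ⟨⟨0, by simpa using Real.pi_pos⟩⟩
instance : Nonempty PiB := ⟨⟨4, by
  have := Real.pi_lt_d2; push_cast; linarith⟩⟩

instance : DenselyOrdered PiA := ⟨fun a b h => by
  refine ⟨⟨(a.1 + b.1)/2, ?_⟩, ?_, ?_⟩
  · have hb := b.2
    have : ((a.1 + b.1)/2 : ℚ) < b.1 := by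
      have : (a.1 : ℚ) < b.1 := h
      linarith
    calc (((a.1 + b.1)/2 : ℚ) : ℝ) < (b.1 : ℝ) := by exact_mod_cast this
      _ < π := hb
  · show (a.1 : ℚ) < _; have : (a.1 : ℚ) < b.1 := h; simp only; linarith
  · show _ < (b.1 : ℚ); have : (a.1 : ℚ) < b.1 := h; simp only; linarith⟩

instance : DenselyOrdered PiB := ⟨fun a b h => by
  refine ⟨⟨(a.1 + b.1)/2, ?_⟩, ?_, ?_⟩
  · have ha := a.2
    have : (a.1 : ℚ) < (a.1 + b.1)/2 := by
      have : (a.1 : ℚ) < b.1 := h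
      linarith
    calc π < (a.1 : ℝ) := ha
      _ < (((a.1 + b.1)/2 : ℚ) : ℝ) := by exact_mod_cast this
  · show (a.1 : ℚ) < _; have : (a.1 : ℚ) < b.1 := h; simp only; linarith
  · show _ < (b.1 : ℚ); have : (a.1 : ℚ) < b.1 := h; simp only; linarith⟩

instance : NoMinOrder PiA := ⟨fun a => ⟨⟨a.1 - 1, by
  have := a.2; push_cast; linarith⟩, by
  show (a.1 - 1 : ℚ) < a.1; linarith⟩⟩

instance : NoMaxOrder PiB := ⟨fun a => ⟨⟨a.1 + 1, by
  have := a.2; push_cast; linarith⟩, by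
  show (a.1 : ℚ) < a.1 + 1; linarith⟩⟩

instance : NoMaxOrder PiA := ⟨fun a => by
  obtain ⟨q, hq1, hq2⟩ := exists_rat_btwn a.2
  exact ⟨⟨q, hq2⟩, by exact_mod_cast hq1⟩⟩

instance : NoMinOrder PiB := ⟨fun a => by
  obtain ⟨q, hq1, hq2⟩ := exists_rat_btwn a.2
  exact ⟨⟨q, hq1⟩, by exact_mod_cast hq2⟩⟩

instance : Countable PiBᵒᵈ := inferInstanceAs (Countable PiB)

end Aux

/-- There is a strictly decreasing bijection `σ : ℚ → ℚ` that exchanges the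
two sides of `π`: for every rational `q`, `q < π` iff `π < σ q`.  In particular `σ` maps
`{q | π < q}` onto `{q | q < π}`. -/
theorem exists_strictAnti_bijection_swapping_sides_of_pi :
    ∃ σ : ℚ → ℚ, Function.Bijective σ ∧ StrictAnti σ ∧
      (∀ q : ℚ, (q : ℝ) < Real.pi ↔ Real.pi < (σ q : ℝ)) ∧
      σ '' {q : ℚ | Real.pi < (q : ℝ)} = {q : ℚ | (q : ℝ) < Real.pi} := by
  obtain ⟨f⟩ : Nonempty (PiA ≃o PiBᵒᵈ) := Order.iso_of_countable_dense _ _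
  -- trichotomy: every rational is on one side of π
  have hside : ∀ q : ℚ, (q : ℝ) < Real.pi ∨ Real.pi < (q : ℝ) := fun q => by
    rcases lt_trichotomy (q : ℝ) Real.pi with h | h | h
    · exact Or.inl h
    · exact absurd ⟨q, h⟩ (irrational_pi)
    · exact Or.inr h
  classical
  set σ : ℚ → ℚ := fun q =>
    if h : (q : ℝ) < Real.pi then (OrderDual.ofDual (f ⟨q, h⟩)).1
    else (f.symm (OrderDual.toDual ⟨q, (hside q).resolve_left h⟩)).1 with hσ
  -- key facts
  have hA : ∀ (q : ℚ) (h : (q : ℝ) < Real.pi),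
      σ q = (OrderDual.ofDual (f ⟨q, h⟩)).1 := fun q h => by simp [hσ, dif_pos h]
  have hB : ∀ (q : ℚ) (h : Real.pi < (q : ℝ)),
      σ q = (f.symm (OrderDual.toDual ⟨q, h⟩)).1 := fun q h => by
    have : ¬ (q : ℝ) < Real.pi := not_lt.2 h.le
    simp [hσ, dif_neg this]
  have hiff : ∀ q : ℚ, (q : ℝ) < Real.pi ↔ Real.pi < (σ q : ℝ) := fun q => by
    constructor
    · intro h; rw [hA q h]; exact (OrderDual.ofDual (f ⟨q, h⟩)).2
    · intro h
      by_contra hq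
      have hq' := (hside q).resolve_left hq
      rw [hB q hq'] at h
      exact absurd (f.symm (OrderDual.toDual ⟨q, hq'⟩)).2 (not_lt.2 h.le)
  -- involution
  have hinv : ∀ q, σ (σ q) = q := fun q => by
    rcases hside q with h | h
    · have h2 : Real.pi < (σ q : ℝ) := (hiff q).1 h
      rw [hB (σ q) h2]
      have : (⟨σ q, h2⟩ : PiB) = OrderDual.ofDual (f ⟨q, h⟩) := by
        ext; exact hA q h
      rw [this]
      simp
    · have h1 : σ q = (f.symm (OrderDual.toDual ⟨q, h⟩)).1 := hB q h
      have h2 : ((σ q : ℚ) : ℝ) < Real.pi := by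
        rw [h1]; exact (f.symm (OrderDual.toDual ⟨q, h⟩)).2
      rw [hA (σ q) h2]
      have : (⟨σ q, h2⟩ : PiA) = f.symm (OrderDual.toDual ⟨q, h⟩) := by
        ext; exact h1
      rw [this]
      simp
  have hbij : Function.Bijective σ :=
    Function.Involutive.bijective hinv
  have hanti : StrictAnti σ := by
    intro a b hab
    rcases hside a with ha | ha <;> rcases hside b with hb | hb
    · -- both < π : f is order-reversing into B
      rw [hA a ha, hA b hb]
      have h2 : (OrderDual.ofDual (f ⟨b, hb⟩) : PiB) < OrderDual.ofDual (f ⟨a, ha⟩) :=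
        f.strictMono (show (⟨a, ha⟩ : PiA) < ⟨b, hb⟩ from hab)
      exact h2
    · -- a < π < b : σ b < π < σ a
      have h1 : Real.pi < ((σ a : ℚ) : ℝ) := (hiff a).1 ha
      have h2 : ((σ b : ℚ) : ℝ) < Real.pi := by
        by_contra h
        exact absurd ((hiff b).2 ((hside (σ b)).resolve_left h)) (not_lt.2 hb.le)
      have : ((σ b : ℚ) : ℝ) < ((σ a : ℚ) : ℝ) := h2.trans h1
      exact_mod_cast this
    · -- π < a and b < π : contradiction with a < b
      exfalso
      have : (a : ℝ) < (b : ℝ) := by exact_mod_cast hab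
      linarith
    · -- both > π
      rw [hB a ha, hB b hb]
      have h2 : f.symm (OrderDual.toDual ⟨b, hb⟩) < f.symm (OrderDual.toDual ⟨a, ha⟩) :=
        f.symm.strictMono
          (show (OrderDual.toDual (⟨b, hb⟩ : PiB)) < OrderDual.toDual ⟨a, ha⟩ from hab)
      exact h2
  refine ⟨σ, hbij, hanti, hiff, ?_⟩
  ext q
  constructor
  · rintro ⟨p, hp, rfl⟩
    have hp' : Real.pi < (p : ℝ) := hp
    rw [hB p hp']
    exact (f.symm (OrderDual.toDual ⟨p, hp'⟩)).2
  · intro hq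
    refine ⟨σ q, ?_, hinv q⟩
    exact (hiff q).1 hq
end
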